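/- arXiv:2306.14858 — 12 statements merged into one kernel-verified Lean document; each statement's English description precedes it below -/
import Mathlib

section
/- For every decision instance, every decision sequence D that maximizes the PAV-score among all decision sequences satisfies EJR. -/
attribute [local instance] Classical.propDecidable

noncomputable def pavF (u : ℕ) : ℝ := ∑ t ∈ Finset.range u, (1:ℝ)/(t+1)

lemma pavF_mono : Monotone pavF := fun a b hab =>
  Finset.sum_le_sum_of_subset_of_nonneg (Finset.range_subset_range.2 hab)
    (fun t _ _ => by positivity)

lemma pavF_succ (u : ℕ) : pavF (u+1) = pavF u + 1/((u:ℝ)+1) := by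
  simp [pavF, Finset.sum_range_succ]

lemma nat_card_sub {T : ℕ} (P : Fin T → Prop) :
    Nat.card {j : Fin T // P j} = (Finset.univ.filter P).card := by
  simp [Nat.card_eq_fintype_card, Fintype.card_subtype]

lemma card_erase_rel {α : Type*} [DecidableEq α] (s t : Finset α) (j : α)
    (h : s.erase j = t.erase j) :
    s.card + (if j ∈ t then 1 else 0) = t.card + (if j ∈ s then 1 else 0) := by
  have key : (s.erase j).card = (t.erase j).card := by rw [h]
  by_cases hs : j ∈ s <;> by_cases ht : j ∈ t <;> simp [hs, ht]
  · have h1 := Finset.card_erase_add_one hs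
    have h2 := Finset.card_erase_add_one ht
    omega
  · have h1 := Finset.card_erase_add_one hs
    rw [Finset.erase_eq_of_notMem ht] at key
    omega
  · have h2 := Finset.card_erase_add_one ht
    rw [Finset.erase_eq_of_notMem hs] at key
    omega
  · rw [Finset.erase_eq_of_notMem hs, Finset.erase_eq_of_notMem ht] at key
    omega

/-- A decision instance with `n ≥ 1` voters (indexed by `Fin n`), time horizon `T ≥ 1`
(rounds indexed by `Fin T`), alternatives drawn from a type `γ`, a finite nonempty set
`C j` of alternatives available in round `j`, and approval sets `A i j ⊆ C j`. -/
structure Inst (n T : ℕ) (γ : Type) where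
  hn : 1 ≤ n
  hT : 1 ≤ T
  C : Fin T → Finset γ
  hC : ∀ j, (C j).Nonempty
  A : Fin n → Fin T → Finset γ
  hA : ∀ i j, A i j ⊆ C j

namespace Inst

variable {n T : ℕ} {γ : Type}

/-- `d` is a decision sequence: one alternative of `C j` for each round `j`. -/
def ValidSeq (I : Inst n T γ) (d : Fin T → γ) : Prop := ∀ j, d j ∈ I.C j

/-- The utility of voter `i`: the number of rounds whose decision `i` approves. -/
noncomputable def util (I : Inst n T γ) (d : Fin T → γ) (i : Fin n) : ℕ :=
  Nat.card {j : Fin T // d j ∈ I.A i j}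

/-- The group `S` agrees in round `j`: some alternative is approved by all members of `S`. -/
def agrees (I : Inst n T γ) (S : Finset (Fin n)) (j : Fin T) : Prop :=
  ∃ c, ∀ i ∈ S, c ∈ I.A i j

/-- The number of rounds in which the group `S` agrees. -/
noncomputable def agreeCount (I : Inst n T γ) (S : Finset (Fin n)) : ℕ :=
  Nat.card {j : Fin T // I.agrees S j}

/-- The PAV-score of a decision sequence: `Σ_{i ∈ N} Σ_{t=1}^{U^i_D} 1/t`. -/
noncomputable def pavScore (I : Inst n T γ) (d : Fin T → γ) : ℝ :=
  ∑ i : Fin n, ∑ t ∈ Finset.range (I.util d i), (1 : ℝ) / (t + 1)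

/-- `D` satisfies EJR: for every `ℓ ≥ 1`, every `k ∈ {1,…,T}`, and every nonempty group
`S` that agrees in at least `k` rounds with `|S| ≥ ℓ·n/k`, some `i ∈ S` has `U^i_D ≥ ℓ`. -/
def EJR (I : Inst n T γ) (d : Fin T → γ) : Prop :=
  ∀ ℓ : ℕ, 1 ≤ ℓ → ∀ k : ℕ, 1 ≤ k → k ≤ T →
    ∀ S : Finset (Fin n), S.Nonempty → k ≤ I.agreeCount S →
      (ℓ : ℝ) * n / k ≤ S.card → ∃ i ∈ S, ℓ ≤ I.util d i

lemma util_eq (I : Inst n T γ) (d : Fin T → γ) (i : Fin n) :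
    I.util d i = (Finset.univ.filter fun j => d j ∈ I.A i j).card := by
  rw [Inst.util, nat_card_sub]
  congr

lemma pavScore_eq (I : Inst n T γ) (d : Fin T → γ) :
    I.pavScore d = ∑ i : Fin n, pavF (I.util d i) := rfl

end Inst

/-- every decision sequence maximizing the PAV-score satisfies EJR. -/
theorem pav_maximizer_satisfies_EJR {n T : ℕ} {γ : Type} (I : Inst n T γ)
    (d : Fin T → γ) (hd : I.ValidSeq d)
    (hmax : ∀ d' : Fin T → γ, I.ValidSeq d' → I.pavScore d' ≤ I.pavScore d) :
    I.EJR d := by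
  intro ℓ hℓ k hk hkT S hS hagree hsize
  by_contra hcon
  push_neg at hcon
  -- basic numeric facts
  have hk0 : (0:ℝ) < k := by exact_mod_cast hk
  have hℓ0 : (0:ℝ) < ℓ := by exact_mod_cast hℓ
  have hn0 : (0:ℝ) < n := by exact_mod_cast I.hn
  have hs1 : (1:ℝ) ≤ S.card := by exact_mod_cast hS.card_pos
  have hSn' : S.card ≤ n := by
    simpa using Finset.card_le_card (Finset.subset_univ S)
  have hSn : (S.card : ℝ) ≤ n := by exact_mod_cast hSn'
  have hsize' : (ℓ:ℝ) * n ≤ S.card * k := by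
    rw [div_le_iff₀ hk0] at hsize
    exact hsize
  have hℓk : (ℓ:ℝ) ≤ k := by nlinarith
  -- the set of rounds where S agrees
  set R : Finset (Fin T) := Finset.univ.filter (I.agrees S) with hR
  have hRk : k ≤ R.card := by
    have : I.agreeCount S = R.card := nat_card_sub _
    omega
  -- gain/loss abbreviations
  set u : Fin n → ℕ := I.util d with hu
  -- key per-round inequality, from PAV optimality
  have key : ∀ j ∈ R,
      (∑ i : Fin n, if i ∈ S ∧ d j ∉ I.A i j then 1/((u i:ℝ)+1) else 0)
        ≤ ∑ i : Fin n, if i ∉ S ∧ d j ∈ I.A i j then 1/(u i:ℝ) else 0 := by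
    intro j hj
    have hAg : I.agrees S j := (Finset.mem_filter.1 hj).2
    obtain ⟨c, hcS⟩ := hAg
    set d' : Fin T → γ := Function.update d j c with hd'def
    have hd' : I.ValidSeq d' := by
      intro t
      by_cases htj : t = j
      · subst htj
        obtain ⟨i0, hi0⟩ := hS
        simpa [hd'def] using I.hA i0 t (hcS i0 hi0)
      · simpa [hd'def, Function.update_of_ne htj] using hd t
    have hscore := hmax d' hd'
    -- utility change relation
    have hcard : ∀ i, I.util d' i + (if d j ∈ I.A i j then 1 else 0)
        = u i + (if c ∈ I.A i j then 1 else 0) := by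
      intro i
      have herase : (Finset.univ.filter fun t => d' t ∈ I.A i t).erase j
          = (Finset.univ.filter fun t => d t ∈ I.A i t).erase j := by
        ext t
        simp only [Finset.mem_erase, Finset.mem_filter, Finset.mem_univ, true_and]
        constructor
        · rintro ⟨htj, hmem⟩
          exact ⟨htj, by rwa [hd'def, Function.update_of_ne htj] at hmem⟩
        · rintro ⟨htj, hmem⟩
          exact ⟨htj, by rwa [hd'def, Function.update_of_ne htj]⟩
      have := card_erase_rel _ _ j herase
      rw [Inst.util_eq, hu, Inst.util_eq]
      simpa [hd'def] using this
    -- per-voter inequality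
    have hper : ∀ i : Fin n,
        (if i ∈ S ∧ d j ∉ I.A i j then 1/((u i:ℝ)+1) else 0)
          - (if i ∉ S ∧ d j ∈ I.A i j then 1/(u i:ℝ) else 0)
        ≤ pavF (I.util d' i) - pavF (u i) := by
      intro i
      have hc2 := hcard i
      by_cases hiS : i ∈ S
      · have hcm : c ∈ I.A i j := hcS i hiS
        by_cases hdj : d j ∈ I.A i j
        · have heq : I.util d' i = u i := by simp [hdj, hcm] at hc2; omega
          simp [hiS, hdj, heq]
        · have heq : I.util d' i = u i + 1 := by simp [hdj, hcm] at hc2; omega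
          rw [heq, pavF_succ]
          simp [hiS, hdj]
      · by_cases hdj : d j ∈ I.A i j
        · have hu1 : 1 ≤ u i := by
            rw [hu, Inst.util_eq]
            refine Finset.card_pos.2 ⟨j, ?_⟩
            simp [hdj]
          have hle : u i - 1 ≤ I.util d' i := by
            split_ifs at hc2 <;> omega
          have hmono := pavF_mono hle
          have heq1 : pavF (u i - 1) = pavF (u i) - 1/(u i : ℝ) := by
            have hrw : u i - 1 + 1 = u i := by omega
            have h2 := pavF_succ (u i - 1)
            rw [hrw] at h2
            have h3 : ((u i - 1 : ℕ):ℝ) + 1 = (u i : ℝ) := by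
              push_cast [Nat.cast_sub hu1]
              ring
            rw [h3] at h2
            rw [h2]; ring
          rw [heq1] at hmono
          simp only [one_div] at hmono
          simp [hiS, hdj]
          linarith
        · have hle : u i ≤ I.util d' i := by split_ifs at hc2 <;> omega
          have := pavF_mono hle
          simp [hiS, hdj]
          linarith
    -- sum up and compare with optimality
    have h1 : ∑ i : Fin n,
        ((if i ∈ S ∧ d j ∉ I.A i j then 1/((u i:ℝ)+1) else 0)
          - (if i ∉ S ∧ d j ∈ I.A i j then 1/(u i:ℝ) else 0))
        ≤ ∑ i : Fin n, (pavF (I.util d' i) - pavF (u i)) :=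
      Finset.sum_le_sum (fun i _ => hper i)
    rw [Finset.sum_sub_distrib, Finset.sum_sub_distrib] at h1
    have h2 : I.pavScore d' - I.pavScore d ≤ 0 := by linarith
    rw [Inst.pavScore_eq, Inst.pavScore_eq] at h2
    rw [hu]
    linarith
  -- sum the key inequality over all rounds in R
  have total : ∑ j ∈ R, (∑ i : Fin n, if i ∈ S ∧ d j ∉ I.A i j then 1/((u i:ℝ)+1) else 0)
      ≤ ∑ j ∈ R, (∑ i : Fin n, if i ∉ S ∧ d j ∈ I.A i j then 1/(u i:ℝ) else 0) :=
    Finset.sum_le_sum key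
  rw [Finset.sum_comm, Finset.sum_comm (s := R)] at total
  -- lower bound the gain sum
  have hgain : ∀ i ∈ S, ((k:ℝ) - ℓ + 1)/ℓ ≤ ∑ j ∈ R, if i ∈ S ∧ d j ∉ I.A i j then 1/((u i:ℝ)+1) else 0 := by
    intro i hiS
    have hui : (u i : ℝ) + 1 ≤ ℓ := by
      have := hcon i hiS
      rw [hu] at this ⊢
      exact_mod_cast this
    have hsum : ∑ j ∈ R, (if i ∈ S ∧ d j ∉ I.A i j then 1/((u i:ℝ)+1) else 0)
        = ((R.filter fun j => d j ∉ I.A i j).card : ℝ) * (1/((u i:ℝ)+1)) := by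
      simp only [hiS, true_and]
      rw [← Finset.sum_filter, Finset.sum_const, nsmul_eq_mul]
    rw [hsum]
    have hp : (R.filter fun j => d j ∈ I.A i j).card ≤ u i := by
      rw [hu, Inst.util_eq]
      exact Finset.card_le_card (Finset.filter_subset_filter _ (Finset.subset_univ R))
    have hsplit : (R.filter fun j => d j ∈ I.A i j).card
        + (R.filter fun j => ¬ (d j ∈ I.A i j)).card = R.card :=
      Finset.card_filter_add_card_filter_not _
    have hm : k ≤ (R.filter fun j => d j ∉ I.A i j).card + u i := by omega
    have hmR : ((k:ℝ) - ℓ + 1) ≤ ((R.filter fun j => d j ∉ I.A i j).card : ℝ) := by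
      have : (k:ℝ) ≤ ((R.filter fun j => d j ∉ I.A i j).card : ℝ) + u i := by
        exact_mod_cast hm
      linarith
    rw [mul_one_div]
    exact div_le_div₀ (Nat.cast_nonneg _) hmR (by positivity) hui
  -- upper bound the loss sum
  have hloss : ∀ i : Fin n, (∑ j ∈ R, if i ∉ S ∧ d j ∈ I.A i j then 1/(u i:ℝ) else 0)
      ≤ (if i ∉ S then (1:ℝ) else 0) := by
    intro i
    by_cases hiS : i ∈ S
    · simp [hiS]
    · simp only [hiS, not_false_iff, true_and, if_true]
      have hsum : ∑ j ∈ R, (if d j ∈ I.A i j then 1/(u i:ℝ) else 0)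
          = ((R.filter fun j => d j ∈ I.A i j).card : ℝ) * (1/(u i:ℝ)) := by
        rw [← Finset.sum_filter, Finset.sum_const, nsmul_eq_mul]
      rw [hsum]
      have hp : (R.filter fun j => d j ∈ I.A i j).card ≤ u i := by
        rw [hu, Inst.util_eq]
        exact Finset.card_le_card (Finset.filter_subset_filter _ (Finset.subset_univ R))
      rcases Nat.eq_zero_or_pos (u i) with h0 | hpos
      · have : (R.filter fun j => d j ∈ I.A i j).card = 0 := by omega
        simp [this]
      · rw [mul_one_div]
        apply div_le_one_of_le₀
        · exact_mod_cast hp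
        · positivity
  -- combine
  have lower : (S.card : ℝ) * (((k:ℝ) - ℓ + 1)/ℓ)
      ≤ ∑ i : Fin n, ∑ j ∈ R, (if i ∈ S ∧ d j ∉ I.A i j then 1/((u i:ℝ)+1) else 0) := by
    have h1 : ∑ i : Fin n, (if i ∈ S then ((k:ℝ) - ℓ + 1)/ℓ else 0)
        ≤ ∑ i : Fin n, ∑ j ∈ R, (if i ∈ S ∧ d j ∉ I.A i j then 1/((u i:ℝ)+1) else 0) := by
      apply Finset.sum_le_sum
      intro i _
      by_cases hiS : i ∈ S
      · simpa [hiS] using hgain i hiS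
      · simp [hiS]
    calc (S.card : ℝ) * (((k:ℝ) - ℓ + 1)/ℓ)
        = ∑ i : Fin n, (if i ∈ S then ((k:ℝ) - ℓ + 1)/ℓ else 0) := by
          rw [Finset.sum_ite_mem, Finset.univ_inter, Finset.sum_const, nsmul_eq_mul]
      _ ≤ _ := h1
  have upper : (∑ i : Fin n, ∑ j ∈ R, (if i ∉ S ∧ d j ∈ I.A i j then 1/(u i:ℝ) else 0))
      ≤ (n:ℝ) - S.card := by
    calc (∑ i : Fin n, ∑ j ∈ R, (if i ∉ S ∧ d j ∈ I.A i j then 1/(u i:ℝ) else 0))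
        ≤ ∑ i : Fin n, (if i ∉ S then (1:ℝ) else 0) :=
          Finset.sum_le_sum (fun i _ => hloss i)
      _ = ((Finset.univ.filter fun i => i ∉ S).card : ℝ) := by
          rw [Finset.sum_boole]
      _ = (n:ℝ) - S.card := by
          have : (Finset.univ.filter fun i => i ∉ S).card = n - S.card := by
            rw [Finset.filter_not]
            simp [Finset.card_sdiff_of_subset (Finset.subset_univ S)]
          rw [this, Nat.cast_sub hSn']
  have hfin : (S.card : ℝ) * (((k:ℝ) - ℓ + 1)/ℓ) ≤ (n:ℝ) - S.card := by
    linarith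
  have hfin2 : (S.card : ℝ) * ((k:ℝ) - ℓ + 1) ≤ ((n:ℝ) - S.card) * ℓ := by
    rw [mul_div_assoc'] at hfin
    exact (div_le_iff₀ hℓ0).1 hfin
  nlinarith [hs1, hsize', hfin2]
end

section
/- For every decision instance and every sequence D_0, D_1, …, D_m of decision sequences such that for each s < m the sequence D_{s+1} differs from D_s in the decision of exactly one round and PAV-score(D_{s+1}) ≥ PAV-score(D_s) + n/T², we have m ≤ T²·(1 + 1/2 + ⋯ + 1/T). In particular, Local-Search PAV performs at most T²·(1 + 1/2 + ⋯ + 1/T) improving swaps before terminating. -/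
attribute [local instance] Classical.propDecidable

lemma util_le {n T : ℕ} {γ : Type} (I : Inst n T γ) (d : Fin T → γ) (i : Fin n) :
    I.util d i ≤ T := by
  have := Nat.card_le_card_of_injective (fun x : {j : Fin T // d j ∈ I.A i j} => x.1)
    (fun a b h => Subtype.ext h)
  simpa [Inst.util, Nat.card_eq_fintype_card] using this

lemma pav_nonneg {n T : ℕ} {γ : Type} (I : Inst n T γ) (d : Fin T → γ) :
    0 ≤ I.pavScore d := by
  apply Finset.sum_nonneg; intro i _
  apply Finset.sum_nonneg; intro t _
  positivity

lemma pav_le {n T : ℕ} {γ : Type} (I : Inst n T γ) (d : Fin T → γ) :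
    I.pavScore d ≤ (n : ℝ) * ∑ t ∈ Finset.range T, (1 : ℝ) / (t + 1) := by
  rw [Inst.pavScore]
  calc ∑ i : Fin n, ∑ t ∈ Finset.range (I.util d i), (1 : ℝ) / (t + 1)
      ≤ ∑ _i : Fin n, ∑ t ∈ Finset.range T, (1 : ℝ) / (t + 1) := by
        apply Finset.sum_le_sum; intro i _
        apply Finset.sum_le_sum_of_subset_of_nonneg
        · exact Finset.range_subset_range.2 (util_le I d i)
        · intro t _ _; positivity
    _ = (n : ℝ) * ∑ t ∈ Finset.range T, (1 : ℝ) / (t + 1) := by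
        simp [Finset.sum_const, mul_comm]

/-- any chain of decision sequences `D_0, …, D_m` in which each step changes
the decision of exactly one round and increases the PAV-score by at least `n/T²` has
length `m ≤ T²·(1 + 1/2 + ⋯ + 1/T)`; hence Local-Search PAV performs at most that many
improving swaps. -/
theorem local_search_pav_few_swaps {n T : ℕ} {γ : Type} (I : Inst n T γ)
    (m : ℕ) (D : Fin (m + 1) → Fin T → γ)
    (hvalid : ∀ s, I.ValidSeq (D s))
    (hdiff : ∀ s : Fin m, ∃! j : Fin T, D s.castSucc j ≠ D s.succ j)
    (himp : ∀ s : Fin m,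
      I.pavScore (D s.castSucc) + (n : ℝ) / (T : ℝ) ^ 2 ≤ I.pavScore (D s.succ)) :
    (m : ℝ) ≤ (T : ℝ) ^ 2 * ∑ t ∈ Finset.range T, (1 : ℝ) / (t + 1) := by
  have hT2 : (0 : ℝ) < (T : ℝ) ^ 2 := by
    have : (1 : ℝ) ≤ T := by exact_mod_cast I.hT
    positivity
  have hn1 : (1 : ℝ) ≤ n := by exact_mod_cast I.hn
  set q : ℝ := (n : ℝ) / (T : ℝ) ^ 2 with hq
  have key : ∀ k : ℕ, ∀ h : k ≤ m,
      I.pavScore (D 0) + k * q ≤ I.pavScore (D ⟨k, Nat.lt_succ_of_le h⟩) := by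
    intro k
    induction k with
    | zero => intro h; simp
    | succ k ih =>
      intro h
      have hk : k ≤ m := Nat.le_of_succ_le h
      have hkm : k < m := h
      have h1 := ih hk
      have h2 := himp ⟨k, hkm⟩
      have e1 : (Fin.castSucc ⟨k, hkm⟩ : Fin (m+1)) = ⟨k, Nat.lt_succ_of_le hk⟩ := rfl
      have e2 : (Fin.succ ⟨k, hkm⟩ : Fin (m+1)) = ⟨k+1, Nat.lt_succ_of_le h⟩ := rfl
      rw [e1, e2] at h2
      push_cast
      linarith
  have hfin := key m le_rfl
  have h0 : (0 : Fin (m+1)) = ⟨0, Nat.succ_pos m⟩ := rfl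
  have hb1 := pav_nonneg I (D 0)
  have hb2 := pav_le I (D ⟨m, Nat.lt_succ_of_le le_rfl⟩)
  have hmain : (m : ℝ) * q ≤ (n : ℝ) * ∑ t ∈ Finset.range T, (1 : ℝ) / (t + 1) := by
    linarith
  rw [hq] at hmain
  have hH : (0 : ℝ) ≤ ∑ t ∈ Finset.range T, (1 : ℝ) / (t + 1) := by
    apply Finset.sum_nonneg; intro t _; positivity
  have hn0 : (0 : ℝ) < n := by linarith
  rw [div_eq_mul_inv] at hmain
  have h3 := mul_le_mul_of_nonneg_right hmain hT2.le
  rw [mul_assoc, mul_assoc, inv_mul_cancel₀ (ne_of_gt hT2), mul_one] at h3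
  nlinarith [h3, hH, hn1, Nat.cast_nonneg (α := ℝ) m]
end

section
/- Every decision sequence produced by an execution of Sequential Phragmén on a decision instance satisfies PJR. -/
attribute [local instance] Classical.propDecidable

namespace Inst

variable {n T : ℕ} {γ : Type}

/-- The number of rounds whose decision is approved by at least one member of `S`. -/
noncomputable def happyCount (I : Inst n T γ) (d : Fin T → γ) (S : Finset (Fin n)) : ℕ :=
  Nat.card {j : Fin T // ∃ i ∈ S, d j ∈ I.A i j}

/-- An execution of Sequential Phragmén: loads `x j` before round `j` (with `x 0 ≡ 0`,
all loads nonnegative), and in each round `j`, if some available alternative is approved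
by at least one voter, the decision `d j` is approved by a nonempty coalition `S` whose
load value `(1 + Σ_{i ∈ S} x_{j-1}(i))/|S|` is minimal among all nonempty coalitions
commonly approving any available alternative; the members of `S` get that value as their
new load and all other loads are unchanged.  If no available alternative is approved by
anyone, the decision is arbitrary and loads are unchanged. -/
def PhragmenExec (I : Inst n T γ) (x : Fin (T + 1) → Fin n → ℝ) (d : Fin T → γ) : Prop :=
  (∀ i, x 0 i = 0) ∧ (∀ j i, 0 ≤ x j i) ∧
  ∀ j : Fin T,
    d j ∈ I.C j ∧
    ((∃ c ∈ I.C j, ∃ i, c ∈ I.A i j) →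
      ∃ S : Finset (Fin n), S.Nonempty ∧ (∀ i ∈ S, d j ∈ I.A i j) ∧
        (∀ c ∈ I.C j, ∀ S' : Finset (Fin n), S'.Nonempty → (∀ i ∈ S', c ∈ I.A i j) →
          (1 + ∑ i ∈ S, x j.castSucc i) / (S.card : ℝ) ≤
            (1 + ∑ i ∈ S', x j.castSucc i) / (S'.card : ℝ)) ∧
        (∀ i ∈ S, x j.succ i = (1 + ∑ i' ∈ S, x j.castSucc i') / (S.card : ℝ)) ∧
        (∀ i ∉ S, x j.succ i = x j.castSucc i)) ∧
    ((¬ ∃ c ∈ I.C j, ∃ i, c ∈ I.A i j) → ∀ i, x j.succ i = x j.castSucc i)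

/-- `D` satisfies PJR: for every `ℓ ≥ 1`, every `k ∈ {1,…,T}`, and every nonempty group
`S` that agrees in at least `k` rounds with `|S| ≥ ℓ·n/k`, there are at least `ℓ` rounds
whose decision is approved by some member of `S`. -/
def PJR (I : Inst n T γ) (d : Fin T → γ) : Prop :=
  ∀ ℓ : ℕ, 1 ≤ ℓ → ∀ k : ℕ, 1 ≤ k → k ≤ T →
    ∀ S : Finset (Fin n), S.Nonempty → k ≤ I.agreeCount S →
      (ℓ : ℝ) * n / k ≤ S.card → ℓ ≤ I.happyCount d S

end Inst

set_option maxHeartbeats 1000000 in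
/-- every decision sequence produced by an execution of Sequential Phragmén
satisfies PJR. -/
theorem phragmen_satisfies_PJR {n T : ℕ} {γ : Type} (I : Inst n T γ)
    (x : Fin (T + 1) → Fin n → ℝ) (d : Fin T → γ)
    (hexec : I.PhragmenExec x d) : I.PJR d := by
  classical
  obtain ⟨hx0, hxnn, hstep⟩ := hexec
  intro ℓ hℓ k hk hkT S hS hagr hsz
  by_contra hcon
  push_neg at hcon
  have hn0 : (0:ℝ) < n := by exact_mod_cast I.hn
  have hk0 : (0:ℝ) < k := by exact_mod_cast hk
  have hl0 : (0:ℝ) < ℓ := by exact_mod_cast hℓ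
  have hScard0 : 0 < S.card := Finset.card_pos.mpr hS
  have hScard0' : (0:ℝ) < S.card := by exact_mod_cast hScard0
  set F : Finset (Fin T) := Finset.univ.filter (fun j => I.agrees S j) with hF
  set H : Finset (Fin T) := Finset.univ.filter (fun j => ∃ i ∈ S, d j ∈ I.A i j) with hH
  have hFcard : I.agreeCount S = F.card := by
    simp [Inst.agreeCount, Nat.card_eq_fintype_card, Fintype.card_subtype, hF]
  have hHcard : I.happyCount d S = H.card := by
    simp [Inst.happyCount, Nat.card_eq_fintype_card, Fintype.card_subtype, hH]
  have hHle : (H.card : ℝ) ≤ (ℓ:ℝ) - 1 := by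
    have h1 : H.card + 1 ≤ ℓ := by omega
    have h2 : (H.card:ℝ) + 1 ≤ (ℓ:ℝ) := by exact_mod_cast h1
    linarith
  -- repackaged round facts, including total load increase = 1
  have hround : ∀ j : Fin T, (∃ c ∈ I.C j, ∃ i, c ∈ I.A i j) →
      ∃ St : Finset (Fin n), St.Nonempty ∧ (∀ i ∈ St, d j ∈ I.A i j) ∧
        (∀ c ∈ I.C j, ∀ S' : Finset (Fin n), S'.Nonempty → (∀ i ∈ S', c ∈ I.A i j) →
          (1 + ∑ i ∈ St, x j.castSucc i) / (St.card : ℝ) ≤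
            (1 + ∑ i ∈ S', x j.castSucc i) / (S'.card : ℝ)) ∧
        (∀ i ∈ St, x j.succ i = (1 + ∑ i' ∈ St, x j.castSucc i') / (St.card : ℝ)) ∧
        (∀ i ∉ St, x j.succ i = x j.castSucc i) ∧
        (∑ i, (x j.succ i - x j.castSucc i)) = 1 := by
    intro j hc
    obtain ⟨St, hne, happ, hmin, hval, hkeep⟩ := (hstep j).2.1 hc
    refine ⟨St, hne, happ, hmin, hval, hkeep, ?_⟩
    have hm0 : (St.card : ℝ) ≠ 0 := by
      exact_mod_cast (Finset.card_pos.mpr hne).ne'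
    have h1 : ∑ i, (x j.succ i - x j.castSucc i) = ∑ i ∈ St, (x j.succ i - x j.castSucc i) := by
      refine (Finset.sum_subset St.subset_univ ?_).symm
      intro i _ hi
      rw [hkeep i hi]; ring
    rw [h1]
    have h2 : ∑ i ∈ St, (x j.succ i - x j.castSucc i)
        = ∑ i ∈ St, ((1 + ∑ i' ∈ St, x j.castSucc i') / (St.card : ℝ) - x j.castSucc i) := by
      refine Finset.sum_congr rfl fun i hi => ?_
      rw [hval i hi]
    rw [h2, Finset.sum_sub_distrib, Finset.sum_const, nsmul_eq_mul]
    field_simp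
    ring
  -- per-step monotonicity of loads
  have hmono : ∀ (j : Fin T) (i : Fin n), x j.castSucc i ≤ x j.succ i := by
    intro j i
    by_cases hc : ∃ c ∈ I.C j, ∃ i, c ∈ I.A i j
    · obtain ⟨St, hne, happ, hmin, hval, hkeep, _⟩ := hround j hc
      by_cases hiS : i ∈ St
      · rw [hval i hiS]
        rcases Finset.eq_empty_or_nonempty (St.erase i) with he | he
        · have hsing : St = {i} := by
            apply Finset.eq_singleton_iff_unique_mem.mpr
            refine ⟨hiS, fun b hb => ?_⟩
            by_contra hbi
            exact absurd (Finset.mem_erase.mpr ⟨hbi, hb⟩) (by simp [he])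
          subst hsing
          simp only [Finset.sum_singleton, Finset.card_singleton, Nat.cast_one, div_one]
          linarith
        · have hsub : ∀ i' ∈ St.erase i, d j ∈ I.A i' j := fun i' hi' =>
            happ i' (Finset.mem_of_mem_erase hi')
          have hle := hmin (d j) (hstep j).1 (St.erase i) he hsub
          have hcard : (St.erase i).card = St.card - 1 := Finset.card_erase_of_mem hiS
          have hm2 : 2 ≤ St.card := by
            have := Finset.card_pos.mpr he
            omega
          have hsum : ∑ i' ∈ St.erase i, x j.castSucc i' + x j.castSucc i
              = ∑ i' ∈ St, x j.castSucc i' := Finset.sum_erase_add St _ hiS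
          set m := (St.card : ℝ) with hm
          have hm1 : (1:ℝ) ≤ m := by
            rw [hm]; exact_mod_cast Nat.one_le_iff_ne_zero.mpr (by omega)
          have hm2' : (2:ℝ) ≤ m := by rw [hm]; exact_mod_cast hm2
          have hcard' : ((St.erase i).card : ℝ) = m - 1 := by
            rw [hcard, hm]
            push_cast [Nat.cast_sub (by omega : 1 ≤ St.card)]
            ring
          rw [hcard'] at hle
          set Sig := ∑ i' ∈ St, x j.castSucc i' with hSg
          have hSge : ∑ i' ∈ St.erase i, x j.castSucc i' = Sig - x j.castSucc i := by
            linarith [hsum]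
          rw [hSge] at hle
          have hmpos : (0:ℝ) < m := by linarith
          have hm1pos : (0:ℝ) < m - 1 := by linarith
          rw [div_le_div_iff₀ hmpos hm1pos] at hle
          rw [le_div_iff₀ hmpos]
          nlinarith [hle]
      · exact (hkeep i hiS).ge
    · exact ((hstep j).2.2 hc i).ge
  -- the load-sum invariant for S
  have hsum : ∀ j : Fin (T+1), ∑ i ∈ S, x j i ≤ ((H.filter fun j' : Fin T => (j'.val) < (j.val)).card : ℝ) := by
    intro j
    induction j using Fin.induction with
    | zero =>
      simp only [Fin.val_zero]
      have : ∑ i ∈ S, x 0 i = 0 := Finset.sum_eq_zero fun i _ => hx0 i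
      rw [this]
      positivity
    | succ j ih =>
      have hvs : (j.succ : ℕ) = (j.val) + 1 := rfl
      have hvc : ((j.castSucc : Fin (T+1)) : ℕ) = (j.val) := rfl
      by_cases hhap : j ∈ H
      · -- happy round: sum increases by at most 1, filter gains j
        have hfil : (H.filter fun j' : Fin T => (j'.val) < ((j.succ : Fin (T+1)).val))
            = insert j (H.filter fun j' : Fin T => (j'.val) < ((j.castSucc : Fin (T+1)).val)) := by
          ext j'
          simp only [Finset.mem_filter, Finset.mem_insert, hvs, hvc, Nat.lt_succ_iff_lt_or_eq]
          constructor
          · rintro ⟨h1, h2 | h2⟩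
            · exact Or.inr ⟨h1, h2⟩
            · exact Or.inl (Fin.ext h2)
          · rintro (rfl | ⟨h1, h2⟩)
            · exact ⟨hhap, Or.inr rfl⟩
            · exact ⟨h1, Or.inl h2⟩
        have hnotmem : j ∉ (H.filter fun j' : Fin T => (j'.val) < ((j.castSucc : Fin (T+1)).val)) := by
          simp [hvc]
        rw [hfil, Finset.card_insert_of_notMem hnotmem]
        -- happy ⇒ nonempty approvals
        have hhap' : ∃ i ∈ S, d j ∈ I.A i j := by
          simpa [hH] using hhap
        obtain ⟨i0, hi0S, hi0⟩ := hhap'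
        have hc : ∃ c ∈ I.C j, ∃ i, c ∈ I.A i j := ⟨d j, (hstep j).1, i0, hi0⟩
        obtain ⟨St, hne, happ, hmin, hval, hkeep, htot⟩ := hround j hc
        have hincS : ∑ i ∈ S, (x j.succ i - x j.castSucc i) ≤ 1 := by
          rw [← htot]
          refine Finset.sum_le_sum_of_subset_of_nonneg S.subset_univ ?_
          intro i _ _
          linarith [hmono j i]
        have : ∑ i ∈ S, x j.succ i ≤ ∑ i ∈ S, x j.castSucc i + 1 := by
          have := Finset.sum_sub_distrib (s := S) (f := fun i => x j.succ i)
            (g := fun i => x j.castSucc i)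
          linarith [hincS, this]
        push_cast
        linarith [ih]
      · -- unhappy round: S's loads unchanged
        have hfil : (H.filter fun j' : Fin T => (j'.val) < ((j.castSucc : Fin (T+1)).val)).card
            ≤ (H.filter fun j' : Fin T => (j'.val) < ((j.succ : Fin (T+1)).val)).card := by
          apply Finset.card_le_card
          intro a ha
          simp only [Finset.mem_filter, Fin.coe_castSucc, Fin.val_succ] at ha ⊢
          exact ⟨ha.1, by omega⟩
        have hunch : ∀ i ∈ S, x j.succ i = x j.castSucc i := by
          intro i hiS
          by_cases hc : ∃ c ∈ I.C j, ∃ i, c ∈ I.A i j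
          · obtain ⟨St, hne, happ, hmin, hval, hkeep, htot⟩ := hround j hc
            have hiSt : i ∉ St := by
              intro hiSt
              exact hhap (by simp only [hH, Finset.mem_filter]; exact ⟨Finset.mem_univ j, i, hiS, happ i hiSt⟩)
            exact hkeep i hiSt
          · exact (hstep j).2.2 hc i
        have heq : ∑ i ∈ S, x j.succ i = ∑ i ∈ S, x j.castSucc i :=
          Finset.sum_congr rfl hunch
        rw [heq]
        calc ∑ i ∈ S, x j.castSucc i
            ≤ ((H.filter fun j' : Fin T => (j'.val) < ((j.castSucc : Fin (T+1)).val)).card : ℝ) := ih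
          _ ≤ _ := by exact_mod_cast hfil
  have hsum' : ∀ j : Fin (T+1), ∑ i ∈ S, x j i ≤ (ℓ:ℝ) - 1 := by
    intro j
    refine le_trans (hsum j) (le_trans ?_ hHle)
    exact_mod_cast Finset.card_le_card (Finset.filter_subset _ H)
  set K : ℝ := (k:ℝ)/(n:ℝ) with hK
  have hK0 : 0 ≤ K := by positivity
  have hKb : ∀ j : Fin T, I.agrees S j →
      ∀ St : Finset (Fin n),
        (∀ c ∈ I.C j, ∀ S' : Finset (Fin n), S'.Nonempty → (∀ i ∈ S', c ∈ I.A i j) →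
          (1 + ∑ i ∈ St, x j.castSucc i) / (St.card : ℝ) ≤
            (1 + ∑ i ∈ S', x j.castSucc i) / (S'.card : ℝ)) →
        (∀ i ∈ St, x j.succ i = (1 + ∑ i' ∈ St, x j.castSucc i') / (St.card : ℝ)) →
        ∀ i ∈ St, x j.succ i ≤ K := by
    intro j hag St hmin hval i hi
    obtain ⟨c, hc⟩ := hag
    obtain ⟨i0, hi0⟩ := id hS
    have hcC : c ∈ I.C j := I.hA i0 j (hc i0 hi0)
    have h1 := hmin c hcC S hS hc
    have h2 : (1 + ∑ i ∈ S, x j.castSucc i) / (S.card:ℝ) ≤ (ℓ:ℝ)/(S.card:ℝ) := by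
      gcongr
      linarith [hsum' j.castSucc]
    have h3 : (ℓ:ℝ)/(S.card:ℝ) ≤ K := by
      rw [hK, div_le_div_iff₀ hScard0' hn0]
      rw [div_le_iff₀ hk0] at hsz
      nlinarith
    rw [hval i hi]
    exact le_trans h1 (le_trans h2 h3)
  have hgain : ∀ i : Fin n, (∑ j ∈ F, (x j.succ i - x j.castSucc i)) ≤ x (Fin.last T) i ∧
      (∑ j ∈ F, (x j.succ i - x j.castSucc i)) ≤ K := by
    intro i
    have key : ∀ j : Fin (T+1),
        (∑ j' ∈ F.filter (fun j' : Fin T => j'.val < j.val), (x j'.succ i - x j'.castSucc i)) ≤ x j i ∧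
        (∑ j' ∈ F.filter (fun j' : Fin T => j'.val < j.val), (x j'.succ i - x j'.castSucc i)) ≤ K := by
      intro j
      induction j using Fin.induction with
      | zero =>
        have he : F.filter (fun j' : Fin T => j'.val < (0:Fin (T+1)).val) = ∅ := by
          apply Finset.filter_false_of_mem; intro a _; simp
        rw [he]
        simp [hx0 i, hK0]
      | succ j ih =>
        by_cases hjF : j ∈ F
        · have hag : I.agrees S j := by simpa [hF] using hjF
          obtain ⟨i0, hi0⟩ := id hS
          obtain ⟨c, hc⟩ := hag
          have hag' : I.agrees S j := ⟨c, hc⟩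
          have hcond : ∃ c ∈ I.C j, ∃ i, c ∈ I.A i j := ⟨c, I.hA i0 j (hc i0 hi0), i0, hc i0 hi0⟩
          obtain ⟨St, hne, happ, hmin, hval, hkeep, htot⟩ := hround j hcond
          have hfil : F.filter (fun j' : Fin T => j'.val < (j.succ : Fin (T+1)).val)
              = insert j (F.filter (fun j' : Fin T => j'.val < (j.castSucc : Fin (T+1)).val)) := by
            ext a
            simp only [Finset.mem_filter, Finset.mem_insert, Fin.val_succ, Fin.coe_castSucc,
              Nat.lt_succ_iff_lt_or_eq]
            constructor
            · rintro ⟨h1, h2 | h2⟩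
              · exact Or.inr ⟨h1, h2⟩
              · exact Or.inl (Fin.ext h2)
            · rintro (rfl | ⟨h1, h2⟩)
              · exact ⟨hjF, Or.inr rfl⟩
              · exact ⟨h1, Or.inl h2⟩
          have hnm : j ∉ F.filter (fun j' : Fin T => j'.val < (j.castSucc : Fin (T+1)).val) := by
            simp
          rw [hfil, Finset.sum_insert hnm]
          by_cases hiSt : i ∈ St
          · have hxle : x j.succ i ≤ K := hKb j hag' St hmin hval i hiSt
            refine ⟨by linarith [ih.1], by linarith [ih.1]⟩
          · have hinc0 : x j.succ i = x j.castSucc i := hkeep i hiSt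
            refine ⟨by rw [hinc0]; linarith [ih.1], by rw [hinc0]; linarith [ih.2]⟩
        · have hfil : F.filter (fun j' : Fin T => j'.val < (j.succ : Fin (T+1)).val)
              = F.filter (fun j' : Fin T => j'.val < (j.castSucc : Fin (T+1)).val) := by
            ext a
            simp only [Finset.mem_filter, Fin.val_succ, Fin.coe_castSucc, Nat.lt_succ_iff_lt_or_eq]
            constructor
            · rintro ⟨h1, h2 | h2⟩
              · exact ⟨h1, h2⟩
              · exact absurd ((Fin.ext h2 : a = j) ▸ h1) hjF
            · rintro ⟨h1, h2⟩
              exact ⟨h1, Or.inl h2⟩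
          rw [hfil]
          exact ⟨le_trans ih.1 (hmono j i), ih.2⟩
    have hfull : F.filter (fun j' : Fin T => j'.val < (Fin.last T).val) = F := by
      apply Finset.filter_true_of_mem
      intro a _
      simpa using a.isLt
    have hlast := key (Fin.last T)
    rw [hfull] at hlast
    exact hlast
  have htotF : ∑ j ∈ F, ∑ i, (x j.succ i - x j.castSucc i) = (F.card : ℝ) := by
    have h1 : ∀ j ∈ F, ∑ i, (x j.succ i - x j.castSucc i) = 1 := by
      intro j hj
      have hag : I.agrees S j := by simpa [hF] using hj
      obtain ⟨i0, hi0⟩ := id hS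
      obtain ⟨c, hc⟩ := hag
      obtain ⟨St, -, -, -, -, -, htot⟩ := hround j ⟨c, I.hA i0 j (hc i0 hi0), i0, hc i0 hi0⟩
      exact htot
    rw [Finset.sum_congr rfl h1, Finset.sum_const, nsmul_eq_mul, mul_one]
  have hswap : ∑ j ∈ F, ∑ i, (x j.succ i - x j.castSucc i)
      = ∑ i, ∑ j ∈ F, (x j.succ i - x j.castSucc i) := Finset.sum_comm
  have hsplit : ∑ i, ∑ j ∈ F, (x j.succ i - x j.castSucc i)
      = ∑ i ∈ S, (∑ j ∈ F, (x j.succ i - x j.castSucc i))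
        + ∑ i ∈ Sᶜ, (∑ j ∈ F, (x j.succ i - x j.castSucc i)) :=
    (Finset.sum_add_sum_compl S _).symm
  have hb1 : ∑ i ∈ S, (∑ j ∈ F, (x j.succ i - x j.castSucc i)) ≤ (ℓ:ℝ) - 1 :=
    le_trans (Finset.sum_le_sum fun i _ => (hgain i).1) (hsum' (Fin.last T))
  have hb2 : ∑ i ∈ Sᶜ, (∑ j ∈ F, (x j.succ i - x j.castSucc i)) ≤ (Sᶜ.card : ℝ) * K := by
    have h := Finset.sum_le_card_nsmul Sᶜ _ K fun i _ => (hgain i).2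
    simpa [nsmul_eq_mul] using h
  have hcompl : (Sᶜ.card : ℝ) = (n:ℝ) - S.card := by
    have h1 : Sᶜ.card = n - S.card := by
      rw [Finset.card_compl]; simp
    rw [h1, Nat.cast_sub (by simpa using Finset.card_le_univ S)]
  have hkF : (k:ℝ) ≤ (F.card:ℝ) := by
    have : k ≤ F.card := hFcard ▸ hagr
    exact_mod_cast this
  have hsz' : (ℓ:ℝ) * n ≤ (S.card:ℝ) * k := by
    rw [div_le_iff₀ hk0] at hsz
    linarith
  have hfin : (k:ℝ) ≤ (ℓ:ℝ) - 1 + ((n:ℝ) - S.card) * K := by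
    calc (k:ℝ) ≤ (F.card:ℝ) := hkF
      _ = ∑ j ∈ F, ∑ i, (x j.succ i - x j.castSucc i) := htotF.symm
      _ = ∑ i ∈ S, (∑ j ∈ F, (x j.succ i - x j.castSucc i))
            + ∑ i ∈ Sᶜ, (∑ j ∈ F, (x j.succ i - x j.castSucc i)) := by rw [hswap, hsplit]
      _ ≤ ((ℓ:ℝ) - 1) + (Sᶜ.card : ℝ) * K := by linarith [hb1, hb2]
      _ = (ℓ:ℝ) - 1 + ((n:ℝ) - S.card) * K := by rw [hcompl]
  have hKn : K * (n:ℝ) = (k:ℝ) := by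
    rw [hK]; field_simp
  have hfin2 : (k:ℝ) * n ≤ ((ℓ:ℝ) - 1) * n + ((n:ℝ) - S.card) * k := by
    have h := mul_le_mul_of_nonneg_right hfin (le_of_lt hn0)
    calc (k:ℝ)*n ≤ ((ℓ:ℝ) - 1 + ((n:ℝ) - S.card) * K) * n := h
      _ = ((ℓ:ℝ)-1)*n + ((n:ℝ) - S.card) * (K * n) := by ring
      _ = _ := by rw [hKn]
  nlinarith [hsz', hn0, hfin2]
end

section
/- There exists a decision instance (one can take n = 10 voters and T = 10 rounds in which the set of alternatives and all approval sets are identical in every round) and an execution of Sequential Phragmén on it whose decision sequence fails Weak EJR. -/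
attribute [local instance] Classical.propDecidable

namespace Inst

variable {n T : ℕ} {γ : Type}

/-- `D` satisfies Weak EJR: for every `ℓ ≥ 1` and every nonempty group `S` that agrees
in every round with `|S| ≥ ℓ·n/T`, some voter `i ∈ S` has `U^i_D ≥ ℓ`. -/
def WeakEJR (I : Inst n T γ) (d : Fin T → γ) : Prop :=
  ∀ ℓ : ℕ, 1 ≤ ℓ → ∀ S : Finset (Fin n), S.Nonempty → (∀ j, I.agrees S j) →
    (ℓ : ℝ) * n / T ≤ S.card → ∃ i ∈ S, ℓ ≤ I.util d i

end Inst


-- ===== auxiliary development =====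

namespace PhCE

/-- Approval sets: voters 0-2 approve {A,Z}={0,2}; voters 3-5 approve {B,Z}={1,2};
voters 6-9 approve {A,B}={0,1}. -/
def appr : Fin 10 → Finset (Fin 3) := fun i =>
  if i.val < 3 then {0, 2} else if i.val < 6 then {1, 2} else {0, 1}

/-- Loads of voters 0-2 after `t` rounds. -/
noncomputable def qa : ℕ → ℝ
  | 0 => 0 | 1 => 1/7 | 2 => 1/7 | 3 => 114/343 | 4 => 114/343
  | 5 => 8915/16807 | 6 => 8915/16807 | 7 => 601252/823543 | 8 => 601252/823543
  | _ => 37529445/40353607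

/-- Loads of voters 3-5 after `t` rounds. -/
noncomputable def qb : ℕ → ℝ
  | 0 => 0 | 1 => 0 | 2 => 11/49 | 3 => 11/49 | 4 => 1030/2401 | 5 => 1030/2401
  | 6 => 74097/117649 | 7 => 74097/117649 | 8 => 4784588/5764801 | 9 => 4784588/5764801
  | _ => 290947735/282475249

/-- Loads of voters 6-9 after `t` rounds. -/
noncomputable def qc : ℕ → ℝ
  | 0 => 0 | 1 => 1/7 | 2 => 11/49 | 3 => 114/343 | 4 => 1030/2401 | 5 => 8915/16807
  | 6 => 74097/117649 | 7 => 601252/823543 | 8 => 4784588/5764801 | 9 => 37529445/40353607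
  | _ => 290947735/282475249

noncomputable def xv : Fin 11 → Fin 10 → ℝ := fun j i =>
  if i.val < 3 then qa j.val else if i.val < 6 then qb j.val else qc j.val

def dv : Fin 10 → Fin 3 := fun j => if j.val % 2 = 0 then 0 else 1

def I0 : Inst 10 10 (Fin 3) where
  hn := by norm_num
  hT := by norm_num
  C := fun _ => Finset.univ
  hC := fun _ => ⟨0, Finset.mem_univ _⟩
  A := fun i _ => appr i
  hA := fun _ _ => Finset.subset_univ _

lemma sum10 (g : Fin 10 → ℝ) :
    ∑ i, g i = g 0 + g 1 + g 2 + g 3 + g 4 + g 5 + g 6 + g 7 + g 8 + g 9 := by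
  rw [show ∑ i, g i
      = g 0 + (g 1 + (g 2 + (g 3 + (g 4 + (g 5 + (g 6 + (g 7 + (g 8 + (g 9 + 0)))))))))
      from rfl]
  ring

lemma sumS (f : Fin 10 → ℝ) (s : Finset (Fin 10)) :
    ∑ i ∈ s, f i = ∑ i : Fin 10, if i ∈ s then f i else 0 := by
  rw [Finset.sum_ite_mem, Finset.univ_inter]

lemma appr0 : ∀ i : Fin 10, (0 : Fin 3) ∈ appr i ↔ i ∈ ({0,1,2,6,7,8,9} : Finset (Fin 10)) := by
  decide

lemma appr1 : ∀ i : Fin 10, (1 : Fin 3) ∈ appr i ↔ i ∈ ({3,4,5,6,7,8,9} : Finset (Fin 10)) := by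
  decide

lemma appr2 : ∀ i : Fin 10, (2 : Fin 3) ∈ appr i ↔ i ∈ ({0,1,2,3,4,5} : Finset (Fin 10)) := by
  decide

lemma memS0 : ∀ i : Fin 10, i ∈ ({0,1,2,6,7,8,9} : Finset (Fin 10)) ↔ (i.val < 3 ∨ 6 ≤ i.val) := by
  decide

lemma memS1 : ∀ i : Fin 10, i ∈ ({3,4,5,6,7,8,9} : Finset (Fin 10)) ↔ 3 ≤ i.val := by
  decide

/-- Key bound: if the total "need" of all approvers is at most 1, then `q` is a lower
bound on the price of every coalition of approvers. -/
lemma key (x : Fin 10 → ℝ) (q : ℝ) (Ap S' : Finset (Fin 10)) (hne : S'.Nonempty)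
    (hsub : S' ⊆ Ap) (hsum : ∑ i ∈ Ap, max (q - x i) 0 ≤ 1) :
    q ≤ (1 + ∑ i ∈ S', x i) / (S'.card : ℝ) := by
  have hc0 : (0 : ℝ) < (S'.card : ℝ) := by exact_mod_cast Finset.card_pos.mpr hne
  rw [le_div_iff₀ hc0]
  have h1 : ∑ i ∈ S', max (q - x i) 0 ≤ ∑ i ∈ Ap, max (q - x i) 0 :=
    Finset.sum_le_sum_of_subset_of_nonneg hsub (fun i _ _ => le_max_right _ _)
  have h2 : q * (S'.card : ℝ) = ∑ i ∈ S', x i + ∑ i ∈ S', (q - x i) := by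
    rw [← Finset.sum_add_distrib]
    rw [Finset.sum_congr rfl (fun i _ => show x i + (q - x i) = q by ring),
      Finset.sum_const, nsmul_eq_mul, mul_comm]
  have h3 : ∑ i ∈ S', (q - x i) ≤ ∑ i ∈ S', max (q - x i) 0 :=
    Finset.sum_le_sum fun i _ => le_max_left _ _
  linarith

/-- Generic even round: candidate 0 is chosen by coalition {0,1,2,6,7,8,9}. -/
lemma roundA (a b c q : ℝ) (xp xn : Fin 10 → ℝ)
    (hxp : ∀ i : Fin 10, xp i = if i.val < 3 then a else if i.val < 6 then b else c)
    (hxn : ∀ i : Fin 10, xn i = if i.val < 3 then q else if i.val < 6 then b else q)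
    (ha : a ≤ q) (hb : b ≤ q) (hc : c ≤ q) (hab : a ≤ b)
    (hq : 3*(q-a) + 4*(q-c) = 1) (h3 : 3*(q-a) + 3*(q-b) ≤ 1) :
    ∃ S : Finset (Fin 10), S.Nonempty ∧ (∀ i ∈ S, (0 : Fin 3) ∈ appr i) ∧
      (∀ cc ∈ (Finset.univ : Finset (Fin 3)), ∀ S' : Finset (Fin 10), S'.Nonempty →
        (∀ i ∈ S', cc ∈ appr i) →
        (1 + ∑ i ∈ S, xp i) / (S.card : ℝ) ≤ (1 + ∑ i ∈ S', xp i) / (S'.card : ℝ)) ∧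
      (∀ i ∈ S, xn i = (1 + ∑ i' ∈ S, xp i') / (S.card : ℝ)) ∧
      (∀ i ∉ S, xn i = xp i) := by
  have hS7 : ((({0,1,2,6,7,8,9} : Finset (Fin 10)).card : ℝ)) = 7 := by
    rw [show ({0,1,2,6,7,8,9} : Finset (Fin 10)).card = 7 from by decide]; norm_num
  have hsum : ∑ i ∈ ({0,1,2,6,7,8,9} : Finset (Fin 10)), xp i = 3*a + 4*c := by
    rw [sumS, sum10]
    simp only [hxp]
    simp (config := { decide := true }) only [if_true, if_false]
    ring
  have hqeq : (1 + ∑ i ∈ ({0,1,2,6,7,8,9} : Finset (Fin 10)), xp i)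
      / ((({0,1,2,6,7,8,9} : Finset (Fin 10)).card : ℝ)) = q := by
    rw [hsum, hS7]
    field_simp
    linarith
  have hmaxa : max (q - a) 0 = q - a := max_eq_left (by linarith)
  have hmaxb : max (q - b) 0 = q - b := max_eq_left (by linarith)
  have hmaxc : max (q - c) 0 = q - c := max_eq_left (by linarith)
  refine ⟨{0,1,2,6,7,8,9}, ⟨0, by decide⟩, by decide, ?_, ?_, ?_⟩
  · intro cc _ S' hne hS'
    rw [hqeq]
    fin_cases cc
    · refine key xp q {0,1,2,6,7,8,9} S' hne (fun i hi => (appr0 i).mp (hS' i hi)) ?_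
      rw [sumS, sum10]
      simp only [hxp]
      simp (config := { decide := true }) only [if_true, if_false]
      rw [hmaxa, hmaxc]
      linarith
    · refine key xp q {3,4,5,6,7,8,9} S' hne (fun i hi => (appr1 i).mp (hS' i hi)) ?_
      rw [sumS, sum10]
      simp only [hxp]
      simp (config := { decide := true }) only [if_true, if_false]
      rw [hmaxb, hmaxc]
      linarith
    · refine key xp q {0,1,2,3,4,5} S' hne (fun i hi => (appr2 i).mp (hS' i hi)) ?_
      rw [sumS, sum10]
      simp only [hxp]
      simp (config := { decide := true }) only [if_true, if_false]
      rw [hmaxa, hmaxb]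
      linarith
  · intro i hi
    rw [hqeq, hxn i]
    have hm := (memS0 i).mp hi
    split_ifs with h1 h2
    · rfl
    · exact absurd hm (by omega)
    · rfl
  · intro i hi
    have hm : ¬(i.val < 3 ∨ 6 ≤ i.val) := fun h => hi ((memS0 i).mpr h)
    rw [hxn i, hxp i]
    split_ifs with h1 h2
    · exact absurd (Or.inl h1) hm
    · rfl
    · exact absurd (Or.inr (by omega)) hm

/-- Generic odd round: candidate 1 is chosen by coalition {3,4,5,6,7,8,9}. -/
lemma roundB (a b c q : ℝ) (xp xn : Fin 10 → ℝ)
    (hxp : ∀ i : Fin 10, xp i = if i.val < 3 then a else if i.val < 6 then b else c)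
    (hxn : ∀ i : Fin 10, xn i = if i.val < 3 then a else if i.val < 6 then q else q)
    (ha : a ≤ q) (hb : b ≤ q) (hc : c ≤ q) (hba : b ≤ a)
    (hq : 3*(q-b) + 4*(q-c) = 1) (h3 : 3*(q-a) + 3*(q-b) ≤ 1) :
    ∃ S : Finset (Fin 10), S.Nonempty ∧ (∀ i ∈ S, (1 : Fin 3) ∈ appr i) ∧
      (∀ cc ∈ (Finset.univ : Finset (Fin 3)), ∀ S' : Finset (Fin 10), S'.Nonempty →
        (∀ i ∈ S', cc ∈ appr i) →
        (1 + ∑ i ∈ S, xp i) / (S.card : ℝ) ≤ (1 + ∑ i ∈ S', xp i) / (S'.card : ℝ)) ∧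
      (∀ i ∈ S, xn i = (1 + ∑ i' ∈ S, xp i') / (S.card : ℝ)) ∧
      (∀ i ∉ S, xn i = xp i) := by
  have hS7 : ((({3,4,5,6,7,8,9} : Finset (Fin 10)).card : ℝ)) = 7 := by
    rw [show ({3,4,5,6,7,8,9} : Finset (Fin 10)).card = 7 from by decide]; norm_num
  have hsum : ∑ i ∈ ({3,4,5,6,7,8,9} : Finset (Fin 10)), xp i = 3*b + 4*c := by
    rw [sumS, sum10]
    simp only [hxp]
    simp (config := { decide := true }) only [if_true, if_false]
    ring
  have hqeq : (1 + ∑ i ∈ ({3,4,5,6,7,8,9} : Finset (Fin 10)), xp i)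
      / ((({3,4,5,6,7,8,9} : Finset (Fin 10)).card : ℝ)) = q := by
    rw [hsum, hS7]
    field_simp
    linarith
  have hmaxa : max (q - a) 0 = q - a := max_eq_left (by linarith)
  have hmaxb : max (q - b) 0 = q - b := max_eq_left (by linarith)
  have hmaxc : max (q - c) 0 = q - c := max_eq_left (by linarith)
  refine ⟨{3,4,5,6,7,8,9}, ⟨3, by decide⟩, by decide, ?_, ?_, ?_⟩
  · intro cc _ S' hne hS'
    rw [hqeq]
    fin_cases cc
    · refine key xp q {0,1,2,6,7,8,9} S' hne (fun i hi => (appr0 i).mp (hS' i hi)) ?_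
      rw [sumS, sum10]
      simp only [hxp]
      simp (config := { decide := true }) only [if_true, if_false]
      rw [hmaxa, hmaxc]
      linarith
    · refine key xp q {3,4,5,6,7,8,9} S' hne (fun i hi => (appr1 i).mp (hS' i hi)) ?_
      rw [sumS, sum10]
      simp only [hxp]
      simp (config := { decide := true }) only [if_true, if_false]
      rw [hmaxb, hmaxc]
      linarith
    · refine key xp q {0,1,2,3,4,5} S' hne (fun i hi => (appr2 i).mp (hS' i hi)) ?_
      rw [sumS, sum10]
      simp only [hxp]
      simp (config := { decide := true }) only [if_true, if_false]
      rw [hmaxa, hmaxb]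
      linarith
  · intro i hi
    rw [hqeq, hxn i]
    have hm := (memS1 i).mp hi
    split_ifs with h1 h2
    · exact absurd hm (by omega)
    · rfl
    · rfl
  · intro i hi
    have hm : ¬(3 ≤ i.val) := fun h => hi ((memS1 i).mpr h)
    rw [hxn i, hxp i]
    split_ifs with h1 h2
    · rfl
    · exact absurd (by omega : 3 ≤ i.val) hm
    · exact absurd (by omega : 3 ≤ i.val) hm

lemma qa_nonneg : ∀ t : ℕ, 0 ≤ qa t := by
  intro t
  unfold qa
  split <;> norm_num

lemma qb_nonneg : ∀ t : ℕ, 0 ≤ qb t := by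
  intro t
  unfold qb
  split <;> norm_num

lemma qc_nonneg : ∀ t : ℕ, 0 ≤ qc t := by
  intro t
  unfold qc
  split <;> norm_num

end PhCE

/-- there is a decision instance (with `n = 10` voters, `T = 10` rounds,
and identical alternative sets and approval sets in every round) and an execution of
Sequential Phragmén on it whose decision sequence fails Weak EJR. -/
theorem phragmen_fails_weakEJR :
    ∃ (γ : Type) (I : Inst 10 10 γ),
      (∀ j j' : Fin 10, I.C j = I.C j') ∧
      (∀ (i : Fin 10) (j j' : Fin 10), I.A i j = I.A i j') ∧
      ∃ (x : Fin 11 → Fin 10 → ℝ) (d : Fin 10 → γ),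
        I.PhragmenExec x d ∧ ¬ I.WeakEJR d := by
  classical
  refine ⟨Fin 3, PhCE.I0, fun _ _ => rfl, fun _ _ _ => rfl, PhCE.xv, PhCE.dv, ⟨?_, ?_, ?_⟩, ?_⟩
  · intro i
    show (if i.val < 3 then PhCE.qa (0 : Fin 11).val
        else if i.val < 6 then PhCE.qb (0 : Fin 11).val else PhCE.qc (0 : Fin 11).val) = 0
    split_ifs <;> rfl
  · intro j i
    show 0 ≤ (if i.val < 3 then PhCE.qa j.val else if i.val < 6 then PhCE.qb j.val
        else PhCE.qc j.val)
    split_ifs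
    · exact PhCE.qa_nonneg _
    · exact PhCE.qb_nonneg _
    · exact PhCE.qc_nonneg _
  · intro j
    refine ⟨Finset.mem_univ _, fun _ => ?_,
      fun h => absurd ⟨0, Finset.mem_univ _, 0, show (0 : Fin 3) ∈ PhCE.appr 0 from by decide⟩ h⟩
    fin_cases j
    · exact PhCE.roundA 0 0 0 (1/7) _ _ (fun _ => rfl) (fun _ => rfl)
        (by norm_num) (by norm_num) (by norm_num) (by norm_num) (by norm_num) (by norm_num)
    · exact PhCE.roundB (1/7) 0 (1/7) (11/49) _ _ (fun _ => rfl) (fun _ => rfl)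
        (by norm_num) (by norm_num) (by norm_num) (by norm_num) (by norm_num) (by norm_num)
    · exact PhCE.roundA (1/7) (11/49) (11/49) (114/343) _ _ (fun _ => rfl) (fun _ => rfl)
        (by norm_num) (by norm_num) (by norm_num) (by norm_num) (by norm_num) (by norm_num)
    · exact PhCE.roundB (114/343) (11/49) (114/343) (1030/2401) _ _ (fun _ => rfl) (fun _ => rfl)
        (by norm_num) (by norm_num) (by norm_num) (by norm_num) (by norm_num) (by norm_num)
    · exact PhCE.roundA (114/343) (1030/2401) (1030/2401) (8915/16807) _ _
        (fun _ => rfl) (fun _ => rfl)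
        (by norm_num) (by norm_num) (by norm_num) (by norm_num) (by norm_num) (by norm_num)
    · exact PhCE.roundB (8915/16807) (1030/2401) (8915/16807) (74097/117649) _ _
        (fun _ => rfl) (fun _ => rfl)
        (by norm_num) (by norm_num) (by norm_num) (by norm_num) (by norm_num) (by norm_num)
    · exact PhCE.roundA (8915/16807) (74097/117649) (74097/117649) (601252/823543) _ _
        (fun _ => rfl) (fun _ => rfl)
        (by norm_num) (by norm_num) (by norm_num) (by norm_num) (by norm_num) (by norm_num)
    · exact PhCE.roundB (601252/823543) (74097/117649) (601252/823543) (4784588/5764801) _ _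
        (fun _ => rfl) (fun _ => rfl)
        (by norm_num) (by norm_num) (by norm_num) (by norm_num) (by norm_num) (by norm_num)
    · exact PhCE.roundA (601252/823543) (4784588/5764801) (4784588/5764801)
        (37529445/40353607) _ _ (fun _ => rfl) (fun _ => rfl)
        (by norm_num) (by norm_num) (by norm_num) (by norm_num) (by norm_num) (by norm_num)
    · exact PhCE.roundB (37529445/40353607) (4784588/5764801) (37529445/40353607)
        (290947735/282475249) _ _ (fun _ => rfl) (fun _ => rfl)
        (by norm_num) (by norm_num) (by norm_num) (by norm_num) (by norm_num) (by norm_num)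
  · intro hEJR
    obtain ⟨i, hi, h6⟩ := hEJR 6 (by norm_num) ({0,1,2,3,4,5} : Finset (Fin 10))
      ⟨0, by decide⟩
      (fun j => ⟨2, fun i hi => show (2 : Fin 3) ∈ PhCE.appr i from by
        revert i; decide⟩)
      (by
        rw [show (({0,1,2,3,4,5} : Finset (Fin 10)).card) = 6 from by decide]
        norm_num)
    have hinj : ∀ j1 j2 : Fin 10, PhCE.dv j1 ∈ PhCE.appr i → PhCE.dv j2 ∈ PhCE.appr i →
        j1.val / 2 = j2.val / 2 → j1 = j2 := by
      fin_cases hi <;> decide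
    have h5 : PhCE.I0.util PhCE.dv i ≤ Nat.card (Fin 5) := by
      refine Nat.card_le_card_of_injective
        (fun j => (⟨j.1.val / 2, by have := j.1.isLt; omega⟩ : Fin 5)) ?_
      intro j1 j2 hEq
      exact Subtype.ext (hinj j1.1 j2.1 j1.2 j2.2 (by simpa [Fin.ext_iff] using hEq))
    have : Nat.card (Fin 5) = 5 := by simp
    omega
end

section
/- For every decision instance, every MES-consistent decision sequence satisfies Weak EJR. -/
attribute [local instance] Classical.propDecidable

namespace Inst

variable {n T : ℕ} {γ : Type}

/-- With price `p = n/T`, an alternative `c` is `ρ`-affordable in round `j` with respect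
to budgets `b` if its approvers can pay `p`, with no one paying more than `ρ`:
`Σ_{i : c ∈ A^i_j} min(b(i), ρ) ≥ p`. -/
def affordable (I : Inst n T γ) (b : Fin n → ℝ) (j : Fin T) (c : γ) (ρ : ℝ) : Prop :=
  (n : ℝ) / T ≤ ∑ i ∈ Finset.univ.filter (fun i => c ∈ I.A i j), min (b i) ρ

/-- An execution of the Method of Equal Shares deciding the first `t ≤ T` rounds:
budgets start at `1`; in each decided round `j < t` the decision `d j ∈ C j` is
`ρ`-affordable for the least `ρ ≥ 0` at which some available alternative is affordable,
approvers pay (their budget is decreased by `ρ`, floored at `0`) and other budgets are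
unchanged; and if `t < T` then no alternative of round `t` is `ρ`-affordable for any
`ρ ≥ 0` (MES terminates prematurely). -/
def MESExec (I : Inst n T γ) (t : ℕ) (b : ℕ → Fin n → ℝ) (d : Fin T → γ) : Prop :=
  t ≤ T ∧ (∀ i, b 0 i = 1) ∧ (∀ j i, 0 ≤ b j i) ∧
  (∀ j : Fin T, (j : ℕ) < t →
    d j ∈ I.C j ∧
    ∃ ρ : ℝ, 0 ≤ ρ ∧ I.affordable (b j) j (d j) ρ ∧
      (∀ ρ' : ℝ, 0 ≤ ρ' → (∃ c ∈ I.C j, I.affordable (b j) j c ρ') → ρ ≤ ρ') ∧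
      (∀ i, d j ∈ I.A i j → b ((j : ℕ) + 1) i = max 0 (b (j : ℕ) i - ρ)) ∧
      (∀ i, d j ∉ I.A i j → b ((j : ℕ) + 1) i = b (j : ℕ) i)) ∧
  (∀ h : t < T, ∀ c ∈ I.C ⟨t, h⟩, ∀ ρ : ℝ, 0 ≤ ρ → ¬ I.affordable (b t) ⟨t, h⟩ c ρ)

/-- A decision sequence is MES-consistent if its decisions in the rounds decided by some
MES execution coincide with those of the execution (decisions in later rounds being
arbitrary alternatives of the respective rounds). -/
def MESConsistent (I : Inst n T γ) (d : Fin T → γ) : Prop :=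
  I.ValidSeq d ∧ ∃ (t : ℕ) (b : ℕ → Fin n → ℝ), I.MESExec t b d

end Inst

/-- every MES-consistent decision sequence satisfies Weak EJR. -/
theorem mes_satisfies_weakEJR {n T : ℕ} {γ : Type} (I : Inst n T γ)
    (d : Fin T → γ) (hd : I.MESConsistent d) : I.WeakEJR d := by
  obtain ⟨hvalid, t, b, htT, hb0, hbnn, hstep, hterm⟩ := hd
  intro ℓ hℓ S hS hagree hsize
  by_contra hcon
  push_neg at hcon
  obtain ⟨i0, hi0⟩ := hS
  have hT0 : (0:ℝ) < T := by exact_mod_cast I.hT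
  have hn0 : (0:ℝ) < n := by exact_mod_cast I.hn
  have hppos : (0:ℝ) < (n:ℝ)/T := div_pos hn0 hT0
  have hscard : 0 < S.card := Finset.card_pos.mpr ⟨i0, hi0⟩
  have hspos : (0:ℝ) < (S.card:ℝ) := by exact_mod_cast hscard
  set q : ℝ := (n:ℝ)/T / S.card with hq
  have hqpos : 0 < q := div_pos hppos hspos
  have hsq : (S.card:ℝ) * q = (n:ℝ)/T := by
    rw [hq]; field_simp
  have hsize' : (ℓ:ℝ) * ((n:ℝ)/T) ≤ S.card := by
    rw [← mul_div_assoc]; exact hsize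
  have hlq : (ℓ:ℝ) * q ≤ 1 := by
    rw [hq, ← mul_div_assoc, div_le_one hspos]; exact hsize'
  set cnt : Fin n → ℕ → ℕ := fun i k =>
    (Finset.univ.filter (fun j : Fin T => (j:ℕ) < k ∧ d j ∈ I.A i j)).card with hcnt
  have hutil : ∀ i ∈ S, ∀ k, (cnt i k : ℝ) ≤ (ℓ:ℝ) - 1 := by
    intro i hi k
    have h1 : cnt i k ≤ I.util d i := by
      have hu : I.util d i = (Finset.univ.filter (fun j : Fin T => d j ∈ I.A i j)).card := by
        rw [Inst.util, Nat.card_eq_fintype_card, Fintype.card_subtype]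
      rw [hu]
      simp only [hcnt]
      apply Finset.card_le_card
      intro j hj
      simp only [Finset.mem_filter, Finset.mem_univ, true_and] at hj ⊢
      exact hj.2
    have h2 : cnt i k + 1 ≤ ℓ := Nat.succ_le_of_lt (lt_of_le_of_lt h1 (hcon i hi))
    have h2' : ((cnt i k : ℝ) + 1) ≤ (ℓ:ℝ) := by exact_mod_cast h2
    linarith
  have hbq : ∀ k, (∀ i ∈ S, 1 - (cnt i k : ℝ) * q ≤ b k i) → ∀ i ∈ S, q ≤ b k i := by
    intro k hmain i hi
    have h1 := hmain i hi
    have h2 := hutil i hi k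
    have h3 : (cnt i k : ℝ) * q ≤ ((ℓ:ℝ) - 1) * q :=
      mul_le_mul_of_nonneg_right h2 hqpos.le
    nlinarith
  have haffS : ∀ (j : Fin T), (∀ i ∈ S, q ≤ b (j:ℕ) i) →
      ∃ c ∈ I.C j, I.affordable (b (j:ℕ)) j c q := by
    intro j hb'
    obtain ⟨c, hc⟩ := hagree j
    refine ⟨c, I.hA i0 j (hc i0 hi0), ?_⟩
    show (n:ℝ)/T ≤ ∑ i ∈ Finset.univ.filter (fun i => c ∈ I.A i j), min (b (j:ℕ) i) q
    have hsub : S ⊆ Finset.univ.filter (fun i => c ∈ I.A i j) :=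
      fun i hi => Finset.mem_filter.mpr ⟨Finset.mem_univ _, hc i hi⟩
    have h1 : ∑ i ∈ S, min (b (j:ℕ) i) q
        ≤ ∑ i ∈ Finset.univ.filter (fun i => c ∈ I.A i j), min (b (j:ℕ) i) q :=
      Finset.sum_le_sum_of_subset_of_nonneg hsub
        (fun i _ _ => le_min (hbnn _ i) hqpos.le)
    have h2 : ∑ i ∈ S, min (b (j:ℕ) i) q = (S.card : ℝ) * q := by
      rw [Finset.sum_congr rfl (fun i hi => min_eq_right (hb' i hi))]
      simp [nsmul_eq_mul]
    rw [← hsq, ← h2]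
    exact h1
  have hcnt_succ : ∀ i k (hkT : k < T),
      cnt i (k+1) = if d ⟨k,hkT⟩ ∈ I.A i ⟨k,hkT⟩ then cnt i k + 1 else cnt i k := by
    intro i k hkT
    by_cases hdi : d ⟨k,hkT⟩ ∈ I.A i ⟨k,hkT⟩
    · rw [if_pos hdi]
      simp only [hcnt]
      have heq : (Finset.univ.filter (fun j : Fin T => (j:ℕ) < k+1 ∧ d j ∈ I.A i j))
          = insert ⟨k,hkT⟩ (Finset.univ.filter (fun j : Fin T => (j:ℕ) < k ∧ d j ∈ I.A i j)) := by
        ext j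
        simp only [Finset.mem_filter, Finset.mem_univ, true_and, Finset.mem_insert]
        constructor
        · rintro ⟨h1, h2⟩
          rcases Nat.lt_succ_iff_lt_or_eq.mp h1 with h | h
          · exact Or.inr ⟨h, h2⟩
          · exact Or.inl (Fin.ext h)
        · rintro (rfl | ⟨h1, h2⟩)
          · exact ⟨Nat.lt_succ_self _, hdi⟩
          · exact ⟨Nat.lt_succ_of_lt h1, h2⟩
      rw [heq, Finset.card_insert_of_notMem]
      simp
    · rw [if_neg hdi]
      simp only [hcnt]
      congr 1
      ext j
      simp only [Finset.mem_filter, Finset.mem_univ, true_and]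
      constructor
      · rintro ⟨h1, h2⟩
        have hne : (j:ℕ) ≠ k := by
          intro h
          have hje : j = (⟨k, hkT⟩ : Fin T) := Fin.ext h
          rw [hje] at h2
          exact hdi h2
        exact ⟨by omega, h2⟩
      · rintro ⟨h1, h2⟩
        exact ⟨Nat.lt_succ_of_lt h1, h2⟩
  have main : ∀ k, k ≤ t → ∀ i ∈ S, 1 - (cnt i k : ℝ) * q ≤ b k i := by
    intro k
    induction k with
    | zero =>
      intro _ i _
      have h0 : cnt i 0 = 0 := by
        simp [hcnt]
      rw [h0, hb0 i]
      simp
    | succ k ih =>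
      intro hk1 i hi
      have hk : k < t := hk1
      have hkT : k < T := lt_of_lt_of_le hk htT
      obtain ⟨hdC, ρ, hρ0, haff, hmin, hpay, hnopay⟩ := hstep ⟨k, hkT⟩ hk
      have hpay' : ∀ i, d ⟨k,hkT⟩ ∈ I.A i ⟨k,hkT⟩ → b (k+1) i = max 0 (b k i - ρ) := hpay
      have hnopay' : ∀ i, d ⟨k,hkT⟩ ∉ I.A i ⟨k,hkT⟩ → b (k+1) i = b k i := hnopay
      have hbq' : ∀ i' ∈ S, q ≤ b k i' := hbq k (fun i' hi' => ih hk.le i' hi')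
      obtain ⟨c, hcC, hcaff⟩ := haffS ⟨k, hkT⟩ hbq'
      have hρq : ρ ≤ q := hmin q hqpos.le ⟨c, hcC, hcaff⟩
      rw [hcnt_succ i k hkT]
      by_cases hdi : d ⟨k,hkT⟩ ∈ I.A i ⟨k,hkT⟩
      · rw [if_pos hdi, hpay' i hdi]
        have h1 := ih hk.le i hi
        have h2 : 1 - ((cnt i k : ℝ) + 1) * q ≤ b k i - ρ := by nlinarith
        calc 1 - ((cnt i k + 1 : ℕ) : ℝ) * q = 1 - ((cnt i k : ℝ) + 1) * q := by
              push_cast; ring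
          _ ≤ b k i - ρ := h2
          _ ≤ max 0 (b k i - ρ) := le_max_right _ _
      · rw [if_neg hdi, hnopay' i hdi]
        exact ih hk.le i hi
  have hfin : ∀ i ∈ S, q ≤ b t i := hbq t (main t le_rfl)
  rcases lt_or_ge t T with hlt | hge
  · obtain ⟨c, hcC, hcaff⟩ := haffS ⟨t, hlt⟩ hfin
    exact hterm hlt c hcC q hqpos.le hcaff
  · have htT' : t = T := le_antisymm htT hge
    subst htT'
    have hround : ∀ k, ∀ hk : k < t, (n:ℝ)/t ≤ ∑ i, (b k i - b (k+1) i) := by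
      intro k hk
      obtain ⟨hdC, ρ, hρ0, haff, hmin, hpay, hnopay⟩ := hstep ⟨k, hk⟩ hk
      have haff' : (n:ℝ)/t ≤ ∑ i ∈ Finset.univ.filter
          (fun i => d ⟨k,hk⟩ ∈ I.A i ⟨k,hk⟩), min (b k i) ρ := haff
      have hpay' : ∀ i, d ⟨k,hk⟩ ∈ I.A i ⟨k,hk⟩ → b (k+1) i = max 0 (b k i - ρ) := hpay
      have hnopay' : ∀ i, d ⟨k,hk⟩ ∉ I.A i ⟨k,hk⟩ → b (k+1) i = b k i := hnopay
      have heq : ∀ i ∈ Finset.univ.filter (fun i => d ⟨k,hk⟩ ∈ I.A i ⟨k,hk⟩),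
          min (b k i) ρ = b k i - b (k+1) i := by
        intro i hi
        have hdi := (Finset.mem_filter.mp hi).2
        rw [hpay' i hdi]
        rcases le_total (b k i) ρ with h | h
        · rw [min_eq_left h, max_eq_left (by linarith)]; ring
        · rw [min_eq_right h, max_eq_right (by linarith [hbnn k i])]; ring
      calc (n:ℝ)/t ≤ ∑ i ∈ Finset.univ.filter
            (fun i => d ⟨k,hk⟩ ∈ I.A i ⟨k,hk⟩), min (b k i) ρ := haff'
        _ = ∑ i ∈ Finset.univ.filter
            (fun i => d ⟨k,hk⟩ ∈ I.A i ⟨k,hk⟩), (b k i - b (k+1) i) :=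
            Finset.sum_congr rfl heq
        _ ≤ ∑ i, (b k i - b (k+1) i) := by
            apply Finset.sum_le_sum_of_subset_of_nonneg (Finset.filter_subset _ _)
            intro i _ hi
            have hdi : d ⟨k,hk⟩ ∉ I.A i ⟨k,hk⟩ := by
              simpa using hi
            rw [hnopay' i hdi]
            simp
    have htel : ∑ k ∈ Finset.range t, ∑ i, (b k i - b (k+1) i)
        = (n:ℝ) - ∑ i, b t i := by
      rw [Finset.sum_comm]
      have h1 : ∀ i : Fin n, ∑ k ∈ Finset.range t, (b k i - b (k+1) i) = 1 - b t i := by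
        intro i
        rw [Finset.sum_range_sub' (fun k => b k i), hb0 i]
      rw [Finset.sum_congr rfl (fun i _ => h1 i), Finset.sum_sub_distrib,
        Finset.sum_const, Finset.card_univ, Fintype.card_fin]
      simp [nsmul_eq_mul]
    have hsum : (n:ℝ) ≤ ∑ k ∈ Finset.range t, ∑ i, (b k i - b (k+1) i) := by
      have h1 : (n:ℝ) = ∑ _k ∈ Finset.range t, (n:ℝ)/t := by
        rw [Finset.sum_const, Finset.card_range, nsmul_eq_mul]
        field_simp
      rw [h1]
      exact Finset.sum_le_sum (fun k hk => hround k (Finset.mem_range.mp hk))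
    have hle0 : ∑ i, b t i ≤ 0 := by
      rw [htel] at hsum; linarith
    have hpos : q ≤ ∑ i, b t i :=
      le_trans (hfin i0 hi0)
        (Finset.single_le_sum (fun i _ => hbnn t i) (Finset.mem_univ i0))
    linarith
end

section
/- There exists a decision instance with n = 8 voters and T = 16 rounds on which every execution of MES decides all T rounds (does not terminate prematurely), and every decision sequence produced by such an execution fails EJR. -/
attribute [local instance] Classical.propDecidable

namespace MesCE

abbrev gam := Fin 16 × Bool

def Cfun : Fin 16 → Finset gam := fun j =>
  if (j : ℕ) ≤ 11 then {(j, false), (j, true)} else {(j, true)}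

def Afun : Fin 8 → Fin 16 → Finset gam := fun i j =>
  if (j : ℕ) ≤ 11 then (if (i : ℕ) ≤ 1 then {(j, false)} else {(j, true)})
  else if (j : ℕ) ≤ 13 then (if (i : ℕ) = 0 then {(j, true)} else ∅)
  else (if (i : ℕ) = 1 then {(j, true)} else ∅)

def I : Inst 8 16 gam where
  hn := by norm_num
  hT := by norm_num
  C := Cfun
  hC := by intro j; unfold Cfun; split <;> simp
  A := Afun
  hA := by
    intro i j
    unfold Afun Cfun
    split_ifs <;> simp [Finset.subset_iff]

/-- Canonical budgets. -/
noncomputable def Bc : ℕ → Fin 8 → ℝ := fun j i =>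
  if (i : ℕ) = 0 then (if j ≤ 12 then 1 else if j ≤ 13 then 1/2 else 0)
  else if (i : ℕ) = 1 then (if j ≤ 14 then 1 else if j ≤ 15 then 1/2 else 0)
  else (if j ≤ 12 then 1 - (j : ℝ)/12 else 0)

lemma afford_true_iff (b : Fin 8 → ℝ) (j : Fin 16) (hj : (j : ℕ) ≤ 11) (ρ : ℝ) :
    I.affordable b j (j, true) ρ ↔
      (1:ℝ)/2 ≤ min (b 2) ρ + min (b 3) ρ + min (b 4) ρ + min (b 5) ρ
        + min (b 6) ρ + min (b 7) ρ := by
  unfold Inst.affordable I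
  rw [Finset.sum_filter, Fin.sum_univ_eight]
  simp +decide [Afun, hj]
  norm_num

lemma afford_false_iff (b : Fin 8 → ℝ) (j : Fin 16) (hj : (j : ℕ) ≤ 11) (ρ : ℝ) :
    I.affordable b j (j, false) ρ ↔ (1:ℝ)/2 ≤ min (b 0) ρ + min (b 1) ρ := by
  unfold Inst.affordable I
  rw [Finset.sum_filter, Fin.sum_univ_eight]
  simp +decide [Afun, hj]
  norm_num

lemma afford_v0_iff (b : Fin 8 → ℝ) (j : Fin 16) (hj : ¬ (j : ℕ) ≤ 11)
    (hj' : (j : ℕ) ≤ 13) (ρ : ℝ) :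
    I.affordable b j (j, true) ρ ↔ (1:ℝ)/2 ≤ min (b 0) ρ := by
  unfold Inst.affordable I
  rw [Finset.sum_filter, Fin.sum_univ_eight]
  simp +decide [Afun, hj, hj']
  norm_num

lemma afford_v1_iff (b : Fin 8 → ℝ) (j : Fin 16) (hj : ¬ (j : ℕ) ≤ 13) (ρ : ℝ) :
    I.affordable b j (j, true) ρ ↔ (1:ℝ)/2 ≤ min (b 1) ρ := by
  have hj' : ¬ (j : ℕ) ≤ 11 := fun h => hj (h.trans (by norm_num))
  unfold Inst.affordable I
  rw [Finset.sum_filter, Fin.sum_univ_eight]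
  simp +decide [Afun, hj, hj']
  norm_num

lemma memA1 (i : Fin 8) (j : Fin 16) (hj : (j : ℕ) ≤ 11) :
    ((j, true) ∈ Afun i j) ↔ 2 ≤ (i : ℕ) := by
  unfold Afun
  rw [if_pos hj]
  split_ifs with h <;> simp <;> omega

lemma memA2 (i : Fin 8) (j : Fin 16) (hj : ¬ (j : ℕ) ≤ 11) (hj' : (j : ℕ) ≤ 13) :
    ((j, true) ∈ Afun i j) ↔ (i : ℕ) = 0 := by
  unfold Afun
  rw [if_neg hj, if_pos hj']
  split_ifs with h <;> simp [h]

lemma memA3 (i : Fin 8) (j : Fin 16) (hj : ¬ (j : ℕ) ≤ 13) :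
    ((j, true) ∈ Afun i j) ↔ (i : ℕ) = 1 := by
  have hj' : ¬ (j : ℕ) ≤ 11 := fun h => hj (h.trans (by norm_num))
  unfold Afun
  rw [if_neg hj', if_neg hj]
  split_ifs with h <;> simp [h]

lemma memC1 (j : Fin 16) (hj : (j : ℕ) ≤ 11) (c : gam) :
    c ∈ Cfun j ↔ c = (j, false) ∨ c = (j, true) := by
  unfold Cfun; rw [if_pos hj]; simp

lemma memC2 (j : Fin 16) (hj : ¬ (j : ℕ) ≤ 11) (c : gam) :
    c ∈ Cfun j ↔ c = (j, true) := by
  unfold Cfun; rw [if_neg hj]; simp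

lemma Bc_eval0 (j : ℕ) (i : Fin 8) (hi : (i : ℕ) = 0) (hj : j ≤ 12) : Bc j i = 1 := by
  simp [Bc, hi, hj]

lemma Bc_eval1 (j : ℕ) (i : Fin 8) (hi : (i : ℕ) = 1) (hj : j ≤ 14) : Bc j i = 1 := by
  simp [Bc, hi, hj]

lemma Bc_evalB (j : ℕ) (i : Fin 8) (hi : 2 ≤ (i : ℕ)) (hj : j ≤ 12) :
    Bc j i = 1 - (j : ℝ)/12 := by
  unfold Bc
  rw [if_neg (by omega), if_neg (by omega), if_pos hj]

lemma round_step {t : ℕ} {b : ℕ → Fin 8 → ℝ} {d : Fin 16 → gam}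
    (h : I.MESExec t b d) (j : Fin 16) (hjt : (j : ℕ) < t)
    (hb : b (j : ℕ) = Bc (j : ℕ)) :
    d j = (j, true) ∧ b ((j : ℕ) + 1) = Bc ((j : ℕ) + 1) := by
  obtain ⟨ht16, -, -, hround, -⟩ := h
  obtain ⟨hdC, ρ, hρ0, haff, hmin, hpay, hnopay⟩ := hround j hjt
  rw [hb] at haff hmin
  have hj16 : (j : ℕ) < 16 := j.isLt
  by_cases hj : (j : ℕ) ≤ 11
  · -- phase 1 : rounds 0–11, winner (j,true), ρ = 1/12
    have hjr : ((j : ℕ) : ℝ) ≤ 11 := by exact_mod_cast hj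
    have hj12 : (j : ℕ) ≤ 12 := by omega
    have hBB : ∀ i : Fin 8, 2 ≤ (i : ℕ) → Bc (j : ℕ) i = 1 - ((j : ℕ) : ℝ)/12 :=
      fun i hi => Bc_evalB _ i hi hj12
    have hwit : I.affordable (Bc (j : ℕ)) j (j, true) (1/12) := by
      rw [afford_true_iff _ j hj, hBB 2 (by decide), hBB 3 (by decide),
        hBB 4 (by decide), hBB 5 (by decide), hBB 6 (by decide),
        hBB 7 (by decide), min_eq_right (by linarith)]
      norm_num
    have hwC : ((j, true) : gam) ∈ I.C j := by
      show _ ∈ Cfun j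
      rw [memC1 j hj]; right; rfl
    have hρle : ρ ≤ 1/12 := hmin (1/12) (by norm_num) ⟨(j, true), hwC, hwit⟩
    have hd : d j = (j, true) := by
      rcases (memC1 j hj (d j)).mp hdC with h1 | h2
      · exfalso
        rw [h1, afford_false_iff _ j hj] at haff
        have h0 : min (Bc (j:ℕ) 0) ρ ≤ ρ := min_le_right _ _
        have h1' : min (Bc (j:ℕ) 1) ρ ≤ ρ := min_le_right _ _
        linarith
      · exact h2
    have hρeq : ρ = 1/12 := by
      refine le_antisymm hρle ?_
      rw [hd, afford_true_iff _ j hj] at haff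
      have h2 := min_le_right (Bc (j:ℕ) 2) ρ
      have h3 := min_le_right (Bc (j:ℕ) 3) ρ
      have h4 := min_le_right (Bc (j:ℕ) 4) ρ
      have h5 := min_le_right (Bc (j:ℕ) 5) ρ
      have h6 := min_le_right (Bc (j:ℕ) 6) ρ
      have h7 := min_le_right (Bc (j:ℕ) 7) ρ
      linarith
    refine ⟨hd, funext fun i => ?_⟩
    by_cases hi : 2 ≤ (i : ℕ)
    · have hmem : d j ∈ I.A i j := by rw [hd]; exact (memA1 i j hj).mpr hi
      rw [hpay i hmem, hb, hρeq, Bc_evalB _ i hi hj12, Bc_evalB _ i hi (by omega)]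
      rw [max_eq_right (by push_cast; linarith)]
      push_cast; ring
    · have hmem : d j ∉ I.A i j := by
        rw [hd]
        intro hm
        exact hi ((memA1 i j hj).mp hm)
      rw [hnopay i hmem, hb]
      rcases (by omega : (i:ℕ) = 0 ∨ (i:ℕ) = 1) with h0 | h1
      · rw [Bc_eval0 _ i h0 hj12, Bc_eval0 _ i h0 (by omega)]
      · rw [Bc_eval1 _ i h1 (by omega), Bc_eval1 _ i h1 (by omega)]
  · -- phases 2 and 3
    have hd : d j = (j, true) := (memC2 j hj (d j)).mp hdC
    have hwC : ((j, true) : gam) ∈ I.C j := (memC2 j hj _).mpr rfl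
    by_cases hj' : (j : ℕ) ≤ 13
    · -- rounds 12, 13 : voter 0 pays 1/2
      have hB0 : Bc (j : ℕ) 0 = if (j:ℕ) ≤ 12 then 1 else 1/2 := by
        unfold Bc
        rw [if_pos (show ((0 : Fin 8):ℕ) = 0 by decide)]
        split_ifs with h1 h2 <;> first | rfl | omega
      have hB0ge : (1:ℝ)/2 ≤ Bc (j : ℕ) 0 := by rw [hB0]; split_ifs <;> norm_num
      have hwit : I.affordable (Bc (j : ℕ)) j (j, true) (1/2) := by
        rw [afford_v0_iff _ j hj hj', min_eq_right hB0ge]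
      have hρle : ρ ≤ 1/2 := hmin (1/2) (by norm_num) ⟨(j, true), hwC, hwit⟩
      have hρge : (1:ℝ)/2 ≤ ρ := by
        rw [hd, afford_v0_iff _ j hj hj'] at haff
        exact le_trans haff (min_le_right _ _)
      have hρeq : ρ = 1/2 := le_antisymm hρle hρge
      refine ⟨hd, funext fun i => ?_⟩
      by_cases hi : (i : ℕ) = 0
      · have hmem : d j ∈ I.A i j := by rw [hd]; exact (memA2 i j hj hj').mpr hi
        rw [hpay i hmem, hb, hρeq]
        rcases (by omega : (j:ℕ) = 12 ∨ (j:ℕ) = 13) with h12 | h13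
        · rw [h12]
          have e1 : Bc 12 i = 1 := Bc_eval0 12 i hi (by norm_num)
          have e2 : Bc 13 i = 1/2 := by simp [Bc, hi]
          rw [e1]
          show (0:ℝ) ⊔ (1 - 1/2) = Bc 13 i
          rw [e2]; norm_num
        · rw [h13]
          have e1 : Bc 13 i = 1/2 := by simp [Bc, hi]
          have e2 : Bc 14 i = 0 := by simp [Bc, hi]
          rw [e1]
          show (0:ℝ) ⊔ (1/2 - 1/2) = Bc 14 i
          rw [e2]; norm_num
      · have hmem : d j ∉ I.A i j := by
          rw [hd]
          intro hm
          exact hi ((memA2 i j hj hj').mp hm)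
        rw [hnopay i hmem, hb]
        rcases (by omega : (j:ℕ) = 12 ∨ (j:ℕ) = 13) with h12 | h13 <;>
          [rw [h12]; rw [h13]] <;> by_cases hi1 : (i:ℕ) = 1 <;>
          simp [Bc, hi, hi1] <;> norm_num
    · -- rounds 14, 15 : voter 1 pays 1/2
      have hB1 : Bc (j : ℕ) 1 = if (j:ℕ) ≤ 14 then 1 else 1/2 := by
        unfold Bc
        rw [if_neg (show ¬((1 : Fin 8):ℕ) = 0 by decide),
          if_pos (show ((1 : Fin 8):ℕ) = 1 by decide)]
        split_ifs with h1 h2 <;> first | rfl | omega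
      have hB1ge : (1:ℝ)/2 ≤ Bc (j : ℕ) 1 := by rw [hB1]; split_ifs <;> norm_num
      have hwit : I.affordable (Bc (j : ℕ)) j (j, true) (1/2) := by
        rw [afford_v1_iff _ j hj', min_eq_right hB1ge]
      have hρle : ρ ≤ 1/2 := hmin (1/2) (by norm_num) ⟨(j, true), hwC, hwit⟩
      have hρge : (1:ℝ)/2 ≤ ρ := by
        rw [hd, afford_v1_iff _ j hj'] at haff
        exact le_trans haff (min_le_right _ _)
      have hρeq : ρ = 1/2 := le_antisymm hρle hρge
      refine ⟨hd, funext fun i => ?_⟩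
      by_cases hi : (i : ℕ) = 1
      · have hmem : d j ∈ I.A i j := by rw [hd]; exact (memA3 i j hj').mpr hi
        rw [hpay i hmem, hb, hρeq]
        rcases (by omega : (j:ℕ) = 14 ∨ (j:ℕ) = 15) with h14 | h15
        · rw [h14]
          have e1 : Bc 14 i = 1 := Bc_eval1 14 i hi (by norm_num)
          have e2 : Bc 15 i = 1/2 := by simp [Bc, hi]
          rw [e1]
          show (0:ℝ) ⊔ (1 - 1/2) = Bc 15 i
          rw [e2]; norm_num
        · rw [h15]
          have e1 : Bc 15 i = 1/2 := by simp [Bc, hi]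
          have e2 : Bc 16 i = 0 := by simp [Bc, hi]
          rw [e1]
          show (0:ℝ) ⊔ (1/2 - 1/2) = Bc 16 i
          rw [e2]; norm_num
      · have hmem : d j ∉ I.A i j := by
          rw [hd]
          intro hm
          exact hi ((memA3 i j hj').mp hm)
        rw [hnopay i hmem, hb]
        rcases (by omega : (j:ℕ) = 14 ∨ (j:ℕ) = 15) with h14 | h15 <;>
          [rw [h14]; rw [h15]] <;> by_cases hi0 : (i:ℕ) = 0 <;>
          simp [Bc, hi, hi0] <;> norm_num

lemma winC (j : Fin 16) : ((j, true) : gam) ∈ I.C j := by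
  by_cases hj : (j : ℕ) ≤ 11
  · rw [show I.C j = Cfun j from rfl, memC1 j hj]; right; rfl
  · exact (memC2 j hj _).mpr rfl

lemma wit (j : Fin 16) : ∃ ρ : ℝ, 0 ≤ ρ ∧ I.affordable (Bc (j : ℕ)) j (j, true) ρ := by
  by_cases hj : (j : ℕ) ≤ 11
  · refine ⟨1/12, by norm_num, ?_⟩
    have hjr : ((j : ℕ) : ℝ) ≤ 11 := by exact_mod_cast hj
    have hj12 : (j : ℕ) ≤ 12 := by omega
    rw [afford_true_iff _ j hj, Bc_evalB _ 2 (by decide) hj12, Bc_evalB _ 3 (by decide) hj12,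
      Bc_evalB _ 4 (by decide) hj12, Bc_evalB _ 5 (by decide) hj12,
      Bc_evalB _ 6 (by decide) hj12, Bc_evalB _ 7 (by decide) hj12,
      min_eq_right (by linarith)]
    norm_num
  · by_cases hj' : (j : ℕ) ≤ 13
    · refine ⟨1/2, by norm_num, ?_⟩
      have hB0 : Bc (j : ℕ) 0 = if (j:ℕ) ≤ 12 then 1 else 1/2 := by
        unfold Bc
        rw [if_pos (show ((0 : Fin 8):ℕ) = 0 by decide)]
        split_ifs with h1 h2 <;> first | rfl | omega
      have hB0ge : (1:ℝ)/2 ≤ Bc (j : ℕ) 0 := by rw [hB0]; split_ifs <;> norm_num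
      rw [afford_v0_iff _ j hj hj', min_eq_right hB0ge]
    · refine ⟨1/2, by norm_num, ?_⟩
      have hB1 : Bc (j : ℕ) 1 = if (j:ℕ) ≤ 14 then 1 else 1/2 := by
        unfold Bc
        rw [if_neg (show ¬((1 : Fin 8):ℕ) = 0 by decide),
          if_pos (show ((1 : Fin 8):ℕ) = 1 by decide)]
        split_ifs with h1 h2 <;> first | rfl | omega
      have hB1ge : (1:ℝ)/2 ≤ Bc (j : ℕ) 1 := by rw [hB1]; split_ifs <;> norm_num
      rw [afford_v1_iff _ j hj', min_eq_right hB1ge]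

lemma budgets_det {t : ℕ} {b : ℕ → Fin 8 → ℝ} {d : Fin 16 → gam}
    (h : I.MESExec t b d) : ∀ j : ℕ, j ≤ t → j ≤ 16 → b j = Bc j := by
  intro j
  induction j with
  | zero =>
    intro _ _
    funext i
    rw [h.2.1 i]
    unfold Bc
    split_ifs <;> first | (norm_num; done) | omega
  | succ j ih =>
    intro hjt hj16
    have hb : b j = Bc j := ih (by omega) (by omega)
    have hlt : j < 16 := by omega
    exact (round_step h ⟨j, hlt⟩ (by simpa using (by omega : j < t))
      (by simpa using hb)).2

lemma t_eq {t : ℕ} {b : ℕ → Fin 8 → ℝ} {d : Fin 16 → gam}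
    (h : I.MESExec t b d) : t = 16 := by
  have h1 : t ≤ 16 := h.1
  by_contra hne
  have ht : t < 16 := lt_of_le_of_ne h1 hne
  have hb : b t = Bc t := budgets_det h t le_rfl h1
  obtain ⟨ρ, hρ0, hρ⟩ := wit ⟨t, ht⟩
  exact h.2.2.2.2 ht ((⟨t, ht⟩ : Fin 16), true) (winC ⟨t, ht⟩) ρ hρ0
    (by rw [hb]; exact hρ)

lemma dec_det {t : ℕ} {b : ℕ → Fin 8 → ℝ} {d : Fin 16 → gam}
    (h : I.MESExec t b d) (j : Fin 16) : d j = (j, true) := by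
  have ht : t = 16 := t_eq h
  have hb : b (j : ℕ) = Bc (j : ℕ) := budgets_det h j (by omega) (by omega)
  exact (round_step h j (by omega) hb).1

lemma card_subtype_finset (s : Finset (Fin 16)) :
    Nat.card {j : Fin 16 // j ∈ s} = s.card := by
  rw [Nat.card_eq_fintype_card, Fintype.card_coe]

lemma agrees_iff : ∀ j : Fin 16,
    I.agrees {0, 1} j ↔ j ∈ ({0,1,2,3,4,5,6,7,8,9,10,11} : Finset (Fin 16)) := by
  intro j
  have hmem : j ∈ ({0,1,2,3,4,5,6,7,8,9,10,11} : Finset (Fin 16)) ↔ (j : ℕ) ≤ 11 := by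
    fin_cases j <;> simp
  rw [hmem]
  constructor
  · rintro ⟨c, hc⟩
    by_contra hj
    by_cases hj' : (j : ℕ) ≤ 13
    · have h1 := hc 1 (by simp)
      simp +decide [show I.A = Afun from rfl, Afun, hj, hj'] at h1
    · have h0 := hc 0 (by simp)
      simp +decide [show I.A = Afun from rfl, Afun, hj, hj'] at h0
  · intro hj
    refine ⟨(j, false), ?_⟩
    intro i hi
    have hi1 : (i : ℕ) ≤ 1 := by
      rcases Finset.mem_insert.mp hi with h | h
      · subst h; decide
      · rw [Finset.mem_singleton.mp h]; decide
    show (j, false) ∈ Afun i j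
    simp [Afun, hj, hi1]

lemma agreeCount_eq : I.agreeCount {0, 1} = 12 := by
  unfold Inst.agreeCount
  rw [Nat.card_congr (Equiv.subtypeEquivRight agrees_iff), card_subtype_finset]
  decide

lemma mem0_iff : ∀ j : Fin 16,
    ((j, true) ∈ Afun 0 j ↔ j ∈ ({12, 13} : Finset (Fin 16))) := by decide

lemma mem1_iff : ∀ j : Fin 16,
    ((j, true) ∈ Afun 1 j ↔ j ∈ ({14, 15} : Finset (Fin 16))) := by decide

lemma util0 {d : Fin 16 → gam} (hd : ∀ j, d j = (j, true)) : I.util d 0 = 2 := by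
  unfold Inst.util
  have hiff : ∀ j : Fin 16, (d j ∈ I.A 0 j) ↔ j ∈ ({12, 13} : Finset (Fin 16)) := by
    intro j; rw [hd j]; exact mem0_iff j
  rw [Nat.card_congr (Equiv.subtypeEquivRight hiff), card_subtype_finset]
  decide

lemma util1 {d : Fin 16 → gam} (hd : ∀ j, d j = (j, true)) : I.util d 1 = 2 := by
  unfold Inst.util
  have hiff : ∀ j : Fin 16, (d j ∈ I.A 1 j) ↔ j ∈ ({14, 15} : Finset (Fin 16)) := by
    intro j; rw [hd j]; exact mem1_iff j
  rw [Nat.card_congr (Equiv.subtypeEquivRight hiff), card_subtype_finset]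
  decide

end MesCE

/-- there is a decision instance with `n = 8` voters and `T = 16` rounds on
which every MES execution decides all `T` rounds (never terminates prematurely), and
every decision sequence produced by such an execution fails EJR. -/
theorem mes_fails_EJR :
    ∃ (γ : Type) (I : Inst 8 16 γ),
      (∀ (t : ℕ) (b : ℕ → Fin 8 → ℝ) (d : Fin 16 → γ), I.MESExec t b d → t = 16) ∧
      (∀ d : Fin 16 → γ, I.MESConsistent d → ¬ I.EJR d) := by
  refine ⟨MesCE.gam, MesCE.I, fun t b d h => MesCE.t_eq h, ?_⟩
  rintro d ⟨-, t, b, hexec⟩ hEJR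
  have hd : ∀ j, d j = (j, true) := fun j => MesCE.dec_det hexec j
  have hcard : ({0, 1} : Finset (Fin 8)).card = 2 := by decide
  obtain ⟨i, hi, hu⟩ := hEJR 3 (by norm_num) 12 (by norm_num) (by norm_num)
    {0, 1} ⟨0, by simp⟩ (by rw [MesCE.agreeCount_eq]) (by rw [hcard]; norm_num)
  rcases Finset.mem_insert.mp hi with h | h
  · rw [h, MesCE.util0 hd] at hu; omega
  · rw [Finset.mem_singleton.mp h, MesCE.util1 hd] at hu; omega
end

section
/- There exists a decision instance with n = 3 voters and T = 6 rounds such that every MES-consistent decision sequence fails JR (and hence fails PJR). -/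
attribute [local instance] Classical.propDecidable

namespace Inst

variable {n T : ℕ} {γ : Type}

/-- `D` satisfies JR: for every `k ∈ {1,…,T}` and every nonempty group `S` that agrees in
at least `k` rounds with `|S| ≥ n/k`, some voter `i ∈ S` has `U^i_D ≥ 1`. -/
def JR (I : Inst n T γ) (d : Fin T → γ) : Prop :=
  ∀ k : ℕ, 1 ≤ k → k ≤ T →
    ∀ S : Finset (Fin n), S.Nonempty → k ≤ I.agreeCount S →
      (n : ℝ) / k ≤ S.card → ∃ i ∈ S, 1 ≤ I.util d i

end Inst

/-!
Voters 0 and 1 approve alternative 0 in every round; voter 2 approves alternative 1 in the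
first three rounds and nothing afterwards, when only alternative 0 is on offer. At price
`p = 1/2`, alternative 0 is `1/4`-affordable as long as voters 0 and 1 have `1/4` left, while
alternative 1, with its single supporter, needs `ρ ≥ 1/2`. Hence MES cannot stop during the
first three rounds and picks 0 in each of them, and all later rounds are forced to 0 as well.
So voter 2 gets utility 0, although the singleton `{2}` agrees in `3` rounds and
`|{2}| ≥ n / 3`.
-/

open scoped Finset

namespace Inst

variable {n T : ℕ} {γ : Type} {I : Inst n T γ}

theorem affordable.div_le_card_mul {b : Fin n → ℝ} {j : Fin T} {c : γ} {ρ : ℝ}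
    (h : I.affordable b j c ρ) :
    (n : ℝ) / T ≤ #(Finset.univ.filter fun i => c ∈ I.A i j) * ρ := by
  refine h.trans ?_
  rw [← nsmul_eq_mul]
  exact Finset.sum_le_card_nsmul _ _ _ fun i _ => min_le_right _ _

theorem affordable_of_le {b : Fin n → ℝ} {j : Fin T} {c : γ} {ρ : ℝ}
    (hb : ∀ i, c ∈ I.A i j → ρ ≤ b i)
    (hp : (n : ℝ) / T ≤ #(Finset.univ.filter fun i => c ∈ I.A i j) * ρ) :
    I.affordable b j c ρ := by
  unfold affordable
  rwa [Finset.sum_congr rfl fun i hi => min_eq_right (hb i (Finset.mem_filter.1 hi).2),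
    Finset.sum_const, nsmul_eq_mul]

theorem MESExec.exists_price_le {t : ℕ} {b : ℕ → Fin n → ℝ} {d : Fin T → γ}
    (hE : I.MESExec t b d) {j : Fin T} (hj : (j : ℕ) < t) {c : γ} {ρ' : ℝ}
    (hc : c ∈ I.C j) (hρ' : 0 ≤ ρ') (haff : I.affordable (b j) j c ρ') :
    ∃ ρ, 0 ≤ ρ ∧ ρ ≤ ρ' ∧ I.affordable (b j) j (d j) ρ ∧
      ∀ i, b j i - ρ' ≤ b ((j : ℕ) + 1) i := by
  obtain ⟨-, ρ, hρ, hdaff, hmin, hpay, hkeep⟩ := hE.2.2.2.1 j hj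
  have hρρ' : ρ ≤ ρ' := hmin ρ' hρ' ⟨c, hc, haff⟩
  refine ⟨ρ, hρ, hρρ', hdaff, fun i => ?_⟩
  by_cases hi : d j ∈ I.A i j
  · rw [hpay i hi]
    exact (sub_le_sub_left hρρ' _).trans (le_max_right _ _)
  · rw [hkeep i hi]
    linarith

theorem util_eq_zero {d : Fin T → γ} {i : Fin n} (h : ∀ j, d j ∉ I.A i j) :
    I.util d i = 0 :=
  have : IsEmpty {j : Fin T // d j ∈ I.A i j} := ⟨fun j => h j.1 j.2⟩
  Nat.card_of_isEmpty

theorem le_agreeCount {S : Finset (Fin n)} {k : ℕ} (hk : k ≤ T)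
    (h : ∀ j : Fin T, (j : ℕ) < k → I.agrees S j) : k ≤ I.agreeCount S := by
  simpa [agreeCount] using Nat.card_le_card_of_injective
    (fun j : Fin k => (⟨Fin.castLE hk j, h _ j.2⟩ : {j : Fin T // I.agrees S j}))
    fun j j' hjj' => Fin.castLE_injective hk (congrArg Subtype.val hjj')

end Inst

namespace MESFailsJR

def decisionInstance : Inst 3 6 (Fin 2) where
  hn := by norm_num
  hT := by norm_num
  C j := if (j : ℕ) < 3 then {0, 1} else {0}
  hC j := by split <;> simp
  A i j := if i = 2 then (if (j : ℕ) < 3 then {1} else ∅) else {0}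
  hA i j := by split_ifs <;> simp

theorem zero_mem_C (j : Fin 6) : (0 : Fin 2) ∈ decisionInstance.C j := by
  simp only [decisionInstance]
  split <;> simp

theorem eq_zero_of_mem_C {j : Fin 6} (hj : 3 ≤ (j : ℕ)) {c : Fin 2}
    (hc : c ∈ decisionInstance.C j) : c = 0 := by
  simpa [decisionInstance, Nat.not_lt.2 hj] using hc

theorem zero_mem_A_iff (i : Fin 3) (j : Fin 6) :
    (0 : Fin 2) ∈ decisionInstance.A i j ↔ i ≠ 2 := by
  simp only [decisionInstance]
  split_ifs <;> simp_all

theorem eq_two_of_one_mem_A {i : Fin 3} {j : Fin 6} (h : (1 : Fin 2) ∈ decisionInstance.A i j) :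
    i = 2 := by
  simp only [decisionInstance] at h
  split_ifs at h <;> simp_all

-- Stated for every decidability instance: `Inst.affordable` filters with the classical one.
theorem card_approvers_zero (j : Fin 6)
    [DecidablePred fun i => (0 : Fin 2) ∈ decisionInstance.A i j] :
    #(Finset.univ.filter fun i => (0 : Fin 2) ∈ decisionInstance.A i j) = 2 := by
  rw [Finset.filter_congr fun i _ => zero_mem_A_iff i j]
  rfl

theorem card_approvers_one_le (j : Fin 6)
    [DecidablePred fun i => (1 : Fin 2) ∈ decisionInstance.A i j] :
    #(Finset.univ.filter fun i => (1 : Fin 2) ∈ decisionInstance.A i j) ≤ 1 :=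
  Finset.card_le_one.2 fun i hi i' hi' => by
    rw [eq_two_of_one_mem_A (Finset.mem_filter.1 hi).2,
      eq_two_of_one_mem_A (Finset.mem_filter.1 hi').2]

theorem zero_affordable {b : Fin 3 → ℝ} (hb : ∀ i, i ≠ 2 → 1 / 4 ≤ b i) (j : Fin 6) :
    decisionInstance.affordable b j 0 (1 / 4) := by
  refine Inst.affordable_of_le (fun i hi => hb i ((zero_mem_A_iff i j).1 hi)) ?_
  rw [card_approvers_zero]
  norm_num

theorem one_not_affordable {b : Fin 3 → ℝ} {j : Fin 6} {ρ : ℝ} (hρ : 0 ≤ ρ)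
    (hρ' : ρ < 1 / 2) :
    ¬ decisionInstance.affordable b j 1 ρ := fun h => by
  have hp := h.div_le_card_mul.trans
    (mul_le_of_le_one_left hρ (Nat.cast_le_one.2 (by convert card_approvers_one_le j)))
  norm_num at hp
  linarith

variable {t : ℕ} {b : ℕ → Fin 3 → ℝ} {d : Fin 6 → Fin 2}

theorem decides_zero_of_quarter_le_budget (hE : decisionInstance.MESExec t b d) {j : Fin 6}
    (hj : (j : ℕ) < t) (hb : ∀ i, i ≠ 2 → 1 / 4 ≤ b j i) :
    d j = 0 ∧ ∀ i, b j i - 1 / 4 ≤ b ((j : ℕ) + 1) i := by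
  obtain ⟨ρ, hρ, hρ', hdaff, hbud⟩ :=
    hE.exists_price_le hj (zero_mem_C j) (by norm_num) (zero_affordable hb j)
  refine ⟨?_, hbud⟩
  match hdj : d j with
  | 0 => rfl
  | 1 => exact absurd (hdj ▸ hdaff) (one_not_affordable hρ (by linarith))

theorem one_sub_div_four_le_budget (hE : decisionInstance.MESExec t b d) :
    ∀ j : ℕ, j ≤ 2 → j ≤ t → ∀ i, i ≠ 2 → 1 - (j : ℝ) / 4 ≤ b j i
  | 0, _, _, i, _ => by simp [hE.2.1 i]
  | j + 1, hj2, hjt, i, hi => by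
    have hprev := one_sub_div_four_le_budget hE j (by omega) (by omega)
    have hj1 : (j : ℝ) ≤ 1 := by exact_mod_cast (by omega : j ≤ 1)
    have hpay := (decides_zero_of_quarter_le_budget hE (j := ⟨j, by omega⟩) hjt
      fun i' hi' => by linarith [hprev i' hi']).2 i
    push_cast
    linarith [hprev i hi]

theorem quarter_le_budget (hE : decisionInstance.MESExec t b d) {j : ℕ} (hj : j ≤ 2)
    (hjt : j ≤ t) {i : Fin 3} (hi : i ≠ 2) : 1 / 4 ≤ b j i := by
  have hj' : (j : ℝ) ≤ 2 := by exact_mod_cast hj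
  linarith [one_sub_div_four_le_budget hE j hj hjt i hi]

theorem three_le_of_MESExec (hE : decisionInstance.MESExec t b d) : 3 ≤ t := by
  by_contra! ht
  exact hE.2.2.2.2 (by omega) 0 (zero_mem_C _) (1 / 4) (by norm_num)
    (zero_affordable (fun i hi => quarter_le_budget hE (by omega) le_rfl hi) _)

theorem eq_zero_of_MESConsistent (hd : decisionInstance.MESConsistent d) (j : Fin 6) : d j = 0 := by
  obtain ⟨hvalid, t, b, hE⟩ := hd
  have ht := three_le_of_MESExec hE
  by_cases hj : (j : ℕ) < 3
  · exact (decides_zero_of_quarter_le_budget hE (by omega)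
      fun i hi => quarter_le_budget hE (by omega) (by omega) hi).1
  · exact eq_zero_of_mem_C (by omega) (hvalid j)

end MESFailsJR

open MESFailsJR in
/-- there is a decision instance with `n = 3` voters and `T = 6` rounds such
that every MES-consistent decision sequence fails JR. -/
theorem mes_fails_JR :
    ∃ (γ : Type) (I : Inst 3 6 γ),
      ∀ d : Fin 6 → γ, I.MESConsistent d → ¬ I.JR d := by
  refine ⟨Fin 2, decisionInstance, fun d hd hJR => ?_⟩
  have hutil : decisionInstance.util d 2 = 0 :=
    Inst.util_eq_zero fun j => by simp [eq_zero_of_MESConsistent hd j, zero_mem_A_iff]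
  have hagree : 3 ≤ decisionInstance.agreeCount {2} :=
    Inst.le_agreeCount (by norm_num) fun j hj =>
      ⟨1, fun i hi => by simp [Finset.mem_singleton.1 hi, decisionInstance, hj]⟩
  obtain ⟨i, hi, hpos⟩ := hJR 3 (by norm_num) (by norm_num) {2} (by simp) hagree (by norm_num)
  rw [Finset.mem_singleton.1 hi, hutil] at hpos
  omega
end

section
/- Let D be a decision sequence produced by an execution of MES that decides all T rounds (it does not terminate prematurely). Then for every integer ℓ ≥ 1 and every nonempty group S ⊆ N with |S| ≥ ℓ·n/T (regardless of in how many rounds S agrees), there are at least ℓ rounds j with d_j ∈ ⋃_{i∈S} A^i_j. In particular, D satisfies PJR. -/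
attribute [local instance] Classical.propDecidable

/-- if an execution of MES decides all `T` rounds, then every nonempty group
`S` with `|S| ≥ ℓ·n/T` (regardless of agreement) has at least `ℓ` rounds whose decision
is approved by some member of `S`; in particular, the decision sequence satisfies PJR. -/
theorem mes_full_execution_PJR {n T : ℕ} {γ : Type} (I : Inst n T γ)
    (b : ℕ → Fin n → ℝ) (d : Fin T → γ)
    (hd : I.ValidSeq d) (hexec : I.MESExec T b d) :
    (∀ ℓ : ℕ, 1 ≤ ℓ → ∀ S : Finset (Fin n), S.Nonempty →
      (ℓ : ℝ) * n / T ≤ S.card → ℓ ≤ I.happyCount d S) ∧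
    I.PJR d := by
  classical
  obtain ⟨hTT, hb0, hbnn, hstep, hterm⟩ := hexec
  have hT1 : (1:ℝ) ≤ T := by exact_mod_cast I.hT
  have hTpos : (0:ℝ) < T := lt_of_lt_of_le one_pos hT1
  have hnpos : (0:ℝ) < n := by
    have : (1:ℝ) ≤ n := by exact_mod_cast I.hn
    linarith
  set p : ℝ := (n:ℝ)/T with hp
  have hppos : 0 < p := div_pos hnpos hTpos
  set pay : Fin T → Fin n → ℝ := fun j i => b (j:ℕ) i - b ((j:ℕ)+1) i with hpaydef
  have key : ∀ j : Fin T,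
      (∀ i, 0 ≤ pay j i) ∧ (∀ i, d j ∉ I.A i j → pay j i = 0) ∧
      p ≤ ∑ i, pay j i := by
    intro j
    obtain ⟨hdC, ρ, hρ0, haff, hmin, hAe, hNe⟩ := hstep j j.isLt
    have hpayeq : ∀ i, d j ∈ I.A i j → pay j i = min (b (j:ℕ) i) ρ := by
      intro i hi
      simp only [hpaydef]
      rw [hAe i hi]
      have hb := hbnn (j:ℕ) i
      rcases le_total (b (j:ℕ) i) ρ with h | h
      · rw [max_eq_left (by linarith), min_eq_left h]; ring
      · rw [max_eq_right (by linarith), min_eq_right h]; ring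
    have hnn : ∀ i, 0 ≤ pay j i := by
      intro i
      by_cases hi : d j ∈ I.A i j
      · rw [hpayeq i hi]; exact le_min (hbnn _ _) hρ0
      · simp [hpaydef, hNe i hi]
    refine ⟨hnn, fun i hi => by simp [hpaydef, hNe i hi], ?_⟩
    calc p ≤ ∑ i ∈ Finset.univ.filter (fun i => d j ∈ I.A i j),
              min (b (j:ℕ) i) ρ := haff
      _ = ∑ i ∈ Finset.univ.filter (fun i => d j ∈ I.A i j), pay j i := by
            refine Finset.sum_congr rfl fun i hi => ?_
            rw [hpayeq i (Finset.mem_filter.mp hi).2]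
      _ ≤ ∑ i, pay j i :=
            Finset.sum_le_sum_of_subset_of_nonneg (Finset.filter_subset _ _)
              (fun i _ _ => hnn i)
  have htel : ∀ i, ∑ j : Fin T, pay j i = 1 - b T i := by
    intro i
    rw [show (∑ j : Fin T, pay j i)
        = ∑ m ∈ Finset.range T, (b m i - b (m+1) i) from
      Fin.sum_univ_eq_sum_range (fun m => b m i - b (m+1) i) T]
    rw [Finset.sum_range_sub' (fun m => b m i), hb0 i]
  -- main part
  have main : ∀ ℓ : ℕ, 1 ≤ ℓ → ∀ S : Finset (Fin n), S.Nonempty →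
      (ℓ : ℝ) * n / T ≤ S.card → ℓ ≤ I.happyCount d S := by
    intro ℓ hℓ S hS hSsz
    set H : Finset (Fin T) :=
      Finset.univ.filter (fun j => ∃ i ∈ S, d j ∈ I.A i j) with hH
    have hhc : I.happyCount d S = H.card := by
      rw [Inst.happyCount, Nat.card_eq_fintype_card, Fintype.card_subtype]
    have hHT : H.card ≤ T := le_trans (Finset.card_le_card (Finset.filter_subset _ _))
      (by simp)
    -- S.card = sum over j of payments of S, plus leftover budgets
    have h1 : (S.card : ℝ) = ∑ j : Fin T, ∑ i ∈ S, pay j i + ∑ i ∈ S, b T i := by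
      rw [Finset.sum_comm]
      have : ∑ i ∈ S, ∑ j : Fin T, pay j i = ∑ i ∈ S, (1 - b T i) := by
        exact Finset.sum_congr rfl fun i _ => htel i
      rw [this, Finset.sum_sub_distrib]
      simp
    -- non-happy rounds: S pays nothing
    have h2 : ∑ j : Fin T, ∑ i ∈ S, pay j i = ∑ j ∈ H, ∑ i ∈ S, pay j i := by
      rw [← Finset.sum_filter_add_sum_filter_not Finset.univ
        (fun j => ∃ i ∈ S, d j ∈ I.A i j) (fun j => ∑ i ∈ S, pay j i)]
      have hz : ∑ j ∈ Finset.univ.filter (fun j => ¬ ∃ i ∈ S, d j ∈ I.A i j),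
          ∑ i ∈ S, pay j i = 0 := by
        refine Finset.sum_eq_zero fun j hj => Finset.sum_eq_zero fun i hi => ?_
        have hj' := (Finset.mem_filter.mp hj).2
        exact (key j).2.1 i fun hmem => hj' ⟨i, hi, hmem⟩
      rw [hz, add_zero]
    have h3 : ∑ j ∈ H, ∑ i ∈ S, pay j i ≤ ∑ j ∈ H, ∑ i, pay j i := by
      refine Finset.sum_le_sum fun j _ => ?_
      exact Finset.sum_le_sum_of_subset_of_nonneg (Finset.subset_univ S)
        (fun i _ _ => (key j).1 i)
    -- total payments over all rounds
    have h4 : ∑ j : Fin T, ∑ i, pay j i = (n:ℝ) - ∑ i, b T i := by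
      rw [Finset.sum_comm]
      have : ∑ i : Fin n, ∑ j : Fin T, pay j i = ∑ i : Fin n, (1 - b T i) := by
        exact Finset.sum_congr rfl fun i _ => htel i
      rw [this, Finset.sum_sub_distrib]
      simp
    -- payments over non-happy rounds are at least (T - H.card) * p
    have h5 : ((T - H.card : ℕ) : ℝ) * p ≤ ∑ j ∈ Hᶜ, ∑ i, pay j i := by
      have hcard : Hᶜ.card = T - H.card := by
        rw [Finset.card_compl, Fintype.card_fin]
      calc ((T - H.card : ℕ) : ℝ) * p = Hᶜ.card • p := by
            rw [hcard, nsmul_eq_mul]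
        _ ≤ ∑ j ∈ Hᶜ, ∑ i, pay j i :=
            Finset.card_nsmul_le_sum Hᶜ _ p (fun j _ => (key j).2.2)
    have h6 : ∑ j ∈ H, ∑ i, pay j i
        = ∑ j : Fin T, ∑ i, pay j i - ∑ j ∈ Hᶜ, ∑ i, pay j i := by
      rw [← Finset.sum_add_sum_compl H (fun j => ∑ i, pay j i)]
      ring
    have hbS : ∑ i ∈ S, b T i ≤ ∑ i, b T i :=
      Finset.sum_le_sum_of_subset_of_nonneg (Finset.subset_univ S)
        (fun i _ _ => hbnn T i)
    have hcast : ((T - H.card : ℕ) : ℝ) = (T : ℝ) - H.card := by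
      rw [Nat.cast_sub hHT]
    have hTp : (T:ℝ) * p = n := by
      rw [hp]; field_simp
    have hSle : (S.card : ℝ) ≤ (H.card : ℝ) * p := by
      have := h1
      rw [h2] at this
      nlinarith [h3, h4, h5, h6, hbS, hcast, hTp]
    -- conclude ℓ ≤ H.card
    have hfin : (ℓ : ℝ) ≤ (H.card : ℝ) := by
      have hl : (ℓ : ℝ) * p ≤ (H.card : ℝ) * p := by
        calc (ℓ:ℝ) * p = (ℓ:ℝ) * n / T := by rw [hp]; ring
          _ ≤ S.card := hSsz
          _ ≤ (H.card : ℝ) * p := hSle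
      exact le_of_mul_le_mul_right hl hppos
    rw [hhc]
    exact_mod_cast hfin
  refine ⟨main, ?_⟩
  intro ℓ hℓ k hk1 hkT S hS _ hsz
  refine main ℓ hℓ S hS ?_
  refine le_trans ?_ hsz
  have hk0 : (0:ℝ) < k := by exact_mod_cast hk1
  have hkT' : (k:ℝ) ≤ T := by exact_mod_cast hkT
  have hln : (0:ℝ) ≤ (ℓ:ℝ) * n := by positivity
  exact div_le_div_of_nonneg_left hln hk0 hkT'
end

section
/- For every ε > 0 there exists a decision instance for which no decision sequence satisfies ε-Stronger PJR. -/
attribute [local instance] Classical.propDecidable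

namespace Inst

variable {n T : ℕ} {γ : Type}

/-- `D` satisfies `ε`-Stronger PJR: for every `ℓ ≥ 1`, every `k ∈ {1,…,T}`, and every
nonempty group `S` that agrees in at least `k` rounds with `|S| ≥ (ℓ − ε)·n/k`, there are
at least `ℓ` rounds whose decision is approved by some member of `S`. -/
def epsStrongerPJR (I : Inst n T γ) (ε : ℝ) (d : Fin T → γ) : Prop :=
  ∀ ℓ : ℕ, 1 ≤ ℓ → ∀ k : ℕ, 1 ≤ k → k ≤ T →
    ∀ S : Finset (Fin n), S.Nonempty → k ≤ I.agreeCount S →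
      ((ℓ : ℝ) - ε) * n / k ≤ S.card → ℓ ≤ I.happyCount d S

end Inst

/-- for every `ε > 0` there is a decision instance on which no decision
sequence satisfies `ε`-Stronger PJR. -/
theorem eps_stronger_PJR_infeasible (ε : ℝ) (hε : 0 < ε) :
    ∃ (n T : ℕ) (γ : Type) (I : Inst n T γ),
      ∀ d : Fin T → γ, I.ValidSeq d → ¬ I.epsStrongerPJR ε d := by
  set T : ℕ := max ⌈1/ε⌉₊ 1 with hTdef
  have hT1 : 1 ≤ T := le_max_right _ _
  have hTe : (1:ℝ)/ε ≤ T := le_trans (Nat.le_ceil _) (by exact_mod_cast le_max_left _ 1)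
  have hεT : (1:ℝ) ≤ ε * T := by
    rw [div_le_iff₀ hε] at hTe
    linarith
  refine ⟨T+1, T, Fin (T+1),
    ⟨Nat.succ_le_succ (Nat.zero_le T), hT1, fun _ => Finset.univ,
      fun _ => Finset.univ_nonempty, fun i _ => {i}, fun i j => Finset.subset_univ _⟩, ?_⟩
  intro d hd hPJR
  have key : ∀ i : Fin (T+1), ∃ j : Fin T, d j = i := by
    intro i
    have hall : ∀ j : Fin T, ∃ c, ∀ i' ∈ ({i} : Finset (Fin (T+1))), c ∈ ({i'} : Finset (Fin (T+1))) := by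
      intro j
      exact ⟨i, by simp⟩
    have hagree : T ≤ Nat.card {j : Fin T // ∃ c, ∀ i' ∈ ({i} : Finset (Fin (T+1))), c ∈ ({i'} : Finset (Fin (T+1)))} := by
      rw [Nat.card_congr (Equiv.subtypeUnivEquiv hall), Nat.card_eq_fintype_card, Fintype.card_fin]
    have hsize : (((1:ℕ):ℝ) - ε) * ((T+1 : ℕ) : ℝ) / (T : ℕ) ≤ (({i} : Finset (Fin (T+1))).card : ℝ) := by
      have hTpos : (0:ℝ) < (T:ℕ) := by exact_mod_cast hT1
      rw [Finset.card_singleton]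
      push_cast
      rw [div_le_one hTpos]
      nlinarith
    have h1 := hPJR 1 le_rfl T hT1 le_rfl {i} (Finset.singleton_nonempty i) hagree hsize
    have h1' : 0 < Nat.card {j : Fin T // ∃ i' ∈ ({i} : Finset (Fin (T+1))), d j ∈ ({i'} : Finset (Fin (T+1)))} := by
      exact Nat.lt_of_lt_of_le Nat.zero_lt_one (by simpa [Inst.happyCount, Inst.agreeCount, Inst.agrees] using h1)
    obtain ⟨⟨j, hj⟩, -⟩ := Nat.card_pos_iff.mp h1'
    simp only [Finset.mem_singleton] at hj
    obtain ⟨i', hi', hdj⟩ := hj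
    exact ⟨j, by simpa [hi'] using hdj⟩
  have hsurj : Function.Surjective d := fun i => key i
  have := Fintype.card_le_of_surjective d hsurj
  simp at this
end

section
/- For every ε > 0 and every semi-online decision rule f, there exists a decision instance on which some decision sequence satisfies ε-Stronger PJR but the decision sequence output by f on that instance does not satisfy ε-Stronger PJR. -/
attribute [local instance] Classical.propDecidable

/-! ### Auxiliary definitions for the counterexample construction -/

/-- The "owner" of a round in the forced phase. -/
def owF (G M : ℕ) (hG : 0 < G) {T : ℕ} (j : Fin T) : Fin G :=
  ⟨(j.val / M) % G, Nat.mod_lt _ hG⟩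

/-- Availability sets: in the forced phase (first `M*G` rounds) only the owner's
alternative is available; afterwards everything. -/
def CF (G M T : ℕ) (hG : 0 < G) : Fin T → Finset (Fin G) :=
  fun j => if j.val < M * G then {owF G M hG j} else Finset.univ

/-- Approval sets: in the forced phase only the owner approves (their own alternative);
in the free phase voter `i` approves `{i}`, except that voter `v` approves nothing
after round `κ`. -/
def AF (G M T : ℕ) (hG : 0 < G) (v : Fin G) (κ : ℕ) : Fin G → Fin T → Finset (Fin G) :=
  fun i j =>
    if j.val < M * G then (if i = owF G M hG j then {i} else ∅)
    else if i = v ∧ κ < j.val then ∅ else {i}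

lemma AF_subset (G M T : ℕ) (hG : 0 < G) (v : Fin G) (κ : ℕ) (i : Fin G) (j : Fin T) :
    AF G M T hG v κ i j ⊆ {i} := by
  unfold AF
  split_ifs <;> simp

lemma AF_sub_CF (G M T : ℕ) (hG : 0 < G) (v : Fin G) (κ : ℕ) (i : Fin G) (j : Fin T) :
    AF G M T hG v κ i j ⊆ CF G M T hG j := by
  unfold AF CF
  split_ifs with h1 h2 h3 <;> simp_all

/-- The instances used in the construction. -/
def InstF (G M T : ℕ) (hG : 0 < G) (hT : 0 < T) (v : Fin G) (κ : ℕ) : Inst G T (Fin G) where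
  hn := hG
  hT := hT
  C := CF G M T hG
  hC := by
    intro j
    unfold CF
    split_ifs
    · exact ⟨_, Finset.mem_singleton_self _⟩
    · exact ⟨⟨0, hG⟩, Finset.mem_univ _⟩
  A := AF G M T hG v κ
  hA := AF_sub_CF G M T hG v κ

lemma nat_card_lower {α : Type} [Fintype α] (P : α → Prop) (F : Finset α)
    (h : ∀ j ∈ F, P j) : F.card ≤ Nat.card {j // P j} := by
  rw [← Set.ncard_coe_finset]
  have hb : Nat.card {j // P j} = Set.ncard {j | P j} := (Nat.card_coe_set_eq _).symm
  rw [hb]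
  exact Set.ncard_le_ncard h (Set.toFinite _)

lemma nat_card_upper {α : Type} [Fintype α] (P : α → Prop) (F : Finset α)
    (h : ∀ j, P j → j ∈ F) : Nat.card {j // P j} ≤ F.card := by
  rw [← Set.ncard_coe_finset]
  have hb : Nat.card {j // P j} = Set.ncard {j | P j} := (Nat.card_coe_set_eq _).symm
  rw [hb]
  exact Set.ncard_le_ncard h (Set.toFinite _)

lemma nat_card_upper_inj {α : Type} [Fintype α] (P : α → Prop) (B : ℕ)
    (g : {j // P j} → Fin B) (hg : Function.Injective g) : Nat.card {j // P j} ≤ B := by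
  have := Nat.card_le_card_of_injective g hg
  simpa [Nat.card_eq_fintype_card] using this

def mkmod (n : ℕ) (h : 0 < n) (x : ℕ) : Fin n := ⟨x % n, Nat.mod_lt _ h⟩

lemma mkmod_val (n : ℕ) (h : 0 < n) (x : ℕ) (hx : x < n) : (mkmod n h x).val = x :=
  Nat.mod_eq_of_lt hx

lemma owF_forced (G M T : ℕ) (hG : 0 < G) (u : Fin G) (m : ℕ) (hm : m < M)
    (hx : u.val * M + m < T) : owF G M hG (⟨u.val * M + m, hx⟩ : Fin T) = u := by
  have hM0 : 0 < M := by omega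
  apply Fin.ext
  show ((u.val * M + m) / M) % G = u.val
  rw [Nat.add_comm, Nat.mul_comm, Nat.add_mul_div_left m u.val hM0, Nat.div_eq_of_lt hm,
    Nat.zero_add, Nat.mod_eq_of_lt u.isLt]

lemma forced_lt (G M : ℕ) (u : Fin G) (m : ℕ) (hm : m < M) : u.val * M + m < M * G := by
  have h1 : u.val * M + m < (u.val + 1) * M := by nlinarith
  have h2 : (u.val + 1) * M ≤ G * M := Nat.mul_le_mul_right M u.isLt
  nlinarith

lemma forced_inv (G M : ℕ) (j : ℕ) (u : Fin G) (hj : j < M * G)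
    (h : (j / M) % G = u.val) : u.val * M ≤ j ∧ j < u.val * M + M := by
  have hM0 : 0 < M := by
    rcases Nat.eq_zero_or_pos M with h0 | h0
    · subst h0; simp at hj
    · exact h0
  have hdiv : j / M < G := Nat.div_lt_of_lt_mul (by omega)
  rw [Nat.mod_eq_of_lt hdiv] at h
  have h2 := Nat.div_add_mod j M
  rw [h] at h2
  have h3 : j % M < M := Nat.mod_lt _ hM0
  have hcomm : M * u.val = u.val * M := Nat.mul_comm M u.val
  omega

set_option maxHeartbeats 2000000 in
/-- for every `ε > 0` and every semi-online decision rule `f` (a rule whose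
decision in round `j` only depends on the voters, the time horizon, and the alternative
sets and approval sets up to round `j`), there is a decision instance on which some
decision sequence satisfies `ε`-Stronger PJR but the decision sequence output by `f` does
not. -/
theorem semionline_cannot_satisfy_eps_stronger_PJR (ε : ℝ) (hε : 0 < ε)
    (f : (n T : ℕ) → (γ : Type) → Inst n T γ → Fin T → γ)
    (hvalid : ∀ (n T : ℕ) (γ : Type) (I : Inst n T γ), I.ValidSeq (f n T γ I))
    (hsemi : ∀ (n T : ℕ) (γ : Type) (I I' : Inst n T γ) (j : Fin T),
      (∀ j' : Fin T, j' ≤ j → I.C j' = I'.C j' ∧ ∀ i, I.A i j' = I'.A i j') →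
      ∀ j' : Fin T, j' ≤ j → f n T γ I j' = f n T γ I' j') :
    ∃ (n T : ℕ) (γ : Type) (I : Inst n T γ),
      (∃ d : Fin T → γ, I.ValidSeq d ∧ I.epsStrongerPJR ε d) ∧
      ¬ I.epsStrongerPJR ε (f n T γ I) := by
  classical
  -- ## Parameters
  set M : ℕ := ⌊ε⌋₊ with hMdef
  have hM_le : (M : ℝ) ≤ ε := Nat.floor_le hε.le
  have hM_lt : ε < (M : ℝ) + 1 := Nat.lt_floor_add_one ε
  have hδpos : (0 : ℝ) < 1 - (ε - M) := by linarith
  obtain ⟨G, hGgt⟩ := exists_nat_gt (max (max (1/ε) (((M : ℝ) + 2)/(1 - (ε - M)))) 3)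
  have hG3 : 3 ≤ G := by
    have h3 : (3 : ℝ) < G := lt_of_le_of_lt (le_max_right _ _) hGgt
    exact_mod_cast h3.le
  have hG0 : 0 < G := by omega
  have hGR : (0 : ℝ) < G := by exact_mod_cast hG0
  have hGε : 1 ≤ ε * G := by
    have h1 : 1/ε < G := lt_of_le_of_lt (le_trans (le_max_left _ _) (le_max_left _ _)) hGgt
    rw [div_lt_iff₀ hε] at h1
    nlinarith
  have hGb : (ε - M) * G ≤ G - M - 2 := by
    have h1 : ((M : ℝ) + 2)/(1 - (ε - M)) < G :=
      lt_of_le_of_lt (le_trans (le_max_right _ _) (le_max_left _ _)) hGgt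
    rw [div_lt_iff₀ hδpos] at h1
    nlinarith
  set T : ℕ := M * G + (2 * G - 1) with hTdef
  have hMMG : M ≤ M * G := Nat.le_mul_of_pos_right M hG0
  have hT0 : 0 < T := by omega
  have hTR : (T : ℝ) = (M : ℝ) * G + 2 * G - 1 := by
    rw [hTdef]
    push_cast [Nat.cast_sub (show 1 ≤ 2*G by omega)]
    ring
  -- ## Real arithmetic lemmas
  have hLB : ∀ ℓ k : ℕ, 1 ≤ k → (k : ℝ) ≤ (M : ℝ) + 2*G - 1 →
      (((ℓ : ℝ) - ε) * G / k ≤ 1) → ℓ ≤ M + 2 := by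
    intro ℓ k hk1 hkb hdiv
    have hkR : (0 : ℝ) < k := by exact_mod_cast hk1
    rw [div_le_one hkR] at hdiv
    have hmul : (ℓ : ℝ) * G < ((M : ℝ) + 3) * G := by nlinarith
    have hlt : (ℓ : ℝ) < (M : ℝ) + 3 := lt_of_mul_lt_mul_right hmul hGR.le
    have : ℓ < M + 3 := by exact_mod_cast hlt
    omega
  have hLC : ∀ ℓ k : ℕ, 1 ≤ k → (k : ℝ) ≤ (M : ℝ) + G + 1 →
      (((ℓ : ℝ) - ε) * G / k ≤ 1) → ℓ ≤ M + 1 := by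
    intro ℓ k hk1 hkb hdiv
    have hkR : (0 : ℝ) < k := by exact_mod_cast hk1
    rw [div_le_one hkR] at hdiv
    have hmul : (ℓ : ℝ) * G < ((M : ℝ) + 2) * G := by nlinarith
    have hlt : (ℓ : ℝ) < (M : ℝ) + 2 := lt_of_mul_lt_mul_right hmul hGR.le
    have : ℓ < M + 2 := by exact_mod_cast hlt
    omega
  have hLA : (((M : ℝ) + 2) - ε) * G / ((M : ℝ) + 2*G - 1) ≤ 1 := by
    have hden : (0 : ℝ) < (M : ℝ) + 2*G - 1 := by nlinarith
    rw [div_le_one hden]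
    have hεG : (M : ℝ) * G ≤ ε * G := mul_le_mul_of_nonneg_right hM_le hGR.le
    rcases Nat.eq_zero_or_pos M with h0 | h0
    · rw [h0] at *
      push_cast
      nlinarith [hGε]
    · have h1 : (1 : ℝ) ≤ M := by exact_mod_cast h0
      nlinarith
  -- ## The base instance and the rule's behaviour on it
  set v0 : Fin G := ⟨0, hG0⟩ with hv0def
  set I0 : Inst G T (Fin G) := InstF G M T hG0 hT0 v0 T with hI0def
  set d0 : Fin T → Fin G := f G T (Fin G) I0 with hd0def
  -- pigeonhole over the first G+1 free-phase rounds
  have hexcT : ∀ t : ℕ, t < 2 * G - 1 → M * G + t < T := by intro t ht; omega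
  have heFlt : ∀ t : Fin (G + 1), M * G + t.val < T := by
    intro t; exact hexcT t.val (by have := t.isLt; omega)
  set eF : Fin (G + 1) → Fin T := fun t => ⟨M * G + t.val, heFlt t⟩ with heFdef
  obtain ⟨a, b, hab, hgab⟩ : ∃ a b : Fin (G + 1), a ≠ b ∧ d0 (eF a) = d0 (eF b) := by
    obtain ⟨a, b, hab, h⟩ := Fintype.exists_ne_map_eq_of_card_lt
      (fun t : Fin (G + 1) => d0 (eF t)) (by simp)
    exact ⟨a, b, hab, h⟩
  -- order them
  obtain ⟨t', t₀, ht't₀, hvv⟩ : ∃ t' t₀ : Fin (G + 1), t'.val < t₀.val ∧ d0 (eF t') = d0 (eF t₀) := by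
    rcases lt_or_gt_of_ne hab with h | h
    · exact ⟨a, b, h, hgab⟩
    · exact ⟨b, a, h, hgab.symm⟩
  set v : Fin G := d0 (eF t₀) with hvdef
  set κ : ℕ := M * G + t₀.val with hκdef
  have hκT : κ < T := heFlt t₀
  -- ## The adapted (kill) instance
  set I1 : Inst G T (Fin G) := InstF G M T hG0 hT0 v κ with hI1def
  set d1 : Fin T → Fin G := f G T (Fin G) I1 with hd1def
  -- semi-online transfer on the prefix up to κ
  have hκle : ∀ t : Fin (G + 1), t.val ≤ t₀.val → eF t ≤ (⟨κ, hκT⟩ : Fin T) := by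
    intro t ht
    rw [Fin.le_def]
    show M * G + t.val ≤ κ
    omega
  have hpre : ∀ j' : Fin T, j' ≤ (⟨κ, hκT⟩ : Fin T) → d0 j' = d1 j' := by
    apply hsemi G T (Fin G) I0 I1 ⟨κ, hκT⟩
    intro j' hj'
    refine ⟨rfl, ?_⟩
    intro i
    show AF G M T hG0 v0 T i j' = AF G M T hG0 v κ i j'
    have hjκ : (j' : ℕ) ≤ κ := hj'
    have hjT : (j' : ℕ) < T := j'.isLt
    unfold AF
    by_cases h1 : (j' : ℕ) < M * G
    · simp [h1]
    · have hTj : ¬ (T < (j' : ℕ)) := by omega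
      have hκj : ¬ (κ < (j' : ℕ)) := by omega
      simp [h1, hTj, hκj]
  have hd1t0 : d1 (eF t₀) = v := by
    rw [← hpre (eF t₀) (hκle t₀ le_rfl)]
  have hd1t' : d1 (eF t') = v := by
    rw [← hpre (eF t') (hκle t' ht't₀.le)]
    exact hvv
  -- ## Round bookkeeping
  set red : ℕ → Fin T := fun x => ⟨x % T, Nat.mod_lt _ hT0⟩ with hreddef
  have hredval : ∀ x : ℕ, x < T → (red x).val = x := fun x hx => Nat.mod_eq_of_lt hx
  -- forced rounds owned by u
  set Fu : Fin G → Finset (Fin T) := fun u => (Finset.range M).image (fun m => red (u.val * M + m))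
    with hFudef
  have hforcedT : ∀ (u : Fin G) (m : ℕ), m < M → u.val * M + m < T := by
    intro u m hm
    have := forced_lt G M u m hm
    omega
  have hFumem : ∀ (u : Fin G) (j : Fin T), j ∈ Fu u →
      (j : ℕ) < M * G ∧ owF G M hG0 j = u := by
    intro u j hj
    rw [hFudef] at hj
    obtain ⟨m, hm, rfl⟩ := Finset.mem_image.mp hj
    rw [Finset.mem_range] at hm
    have hv := hredval _ (hforcedT u m hm)
    constructor
    · rw [hv]; exact forced_lt G M u m hm
    · have : red (u.val * M + m) = (⟨u.val * M + m, hforcedT u m hm⟩ : Fin T) := Fin.ext hv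
      rw [this]
      exact owF_forced G M T hG0 u m hm _
  have hFucard : ∀ u, (Fu u).card = M := by
    intro u
    rw [hFudef]
    rw [Finset.card_image_of_injOn, Finset.card_range]
    intro x hx y hy hxy
    rw [Finset.mem_coe, Finset.mem_range] at hx hy
    have h1 : (red (u.val * M + x)).val = u.val * M + x := hredval _ (hforcedT u x hx)
    have h2 : (red (u.val * M + y)).val = u.val * M + y := hredval _ (hforcedT u y hy)
    have hxy' : red (u.val * M + x) = red (u.val * M + y) := hxy
    rw [Fin.ext_iff, h1, h2] at hxy'
    omega
  -- decisions on forced rounds are forced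
  have hforced_dec : ∀ (dd : Fin T → Fin G), I1.ValidSeq dd → ∀ (u : Fin G) (j : Fin T),
      j ∈ Fu u → dd j = u := by
    intro dd hdd u j hj
    obtain ⟨hjlt, hjow⟩ := hFumem u j hj
    have := hdd j
    have hC : I1.C j = {owF G M hG0 j} := by
      show CF G M T hG0 j = _
      unfold CF
      rw [if_pos hjlt]
    rw [hC, hjow] at this
    exact Finset.mem_singleton.mp this
  -- ## The rule starves some voter u ≠ v
  set cnt : Fin G → ℕ := fun u => (Finset.univ.filter fun j : Fin T => d1 j = u).card with hcntdef
  have hfiber : ∑ u : Fin G, cnt u = T := by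
    have := Finset.card_eq_sum_card_fiberwise
      (f := d1) (s := Finset.univ) (t := Finset.univ) (fun j _ => Finset.mem_univ (d1 j))
    rw [← this]
    simp
  have hcntv : M + 2 ≤ cnt v := by
    have hsub : Fu v ∪ {eF t', eF t₀} ⊆ Finset.univ.filter (fun j : Fin T => d1 j = v) := by
      intro j hj
      rw [Finset.mem_union] at hj
      rw [Finset.mem_filter]
      refine ⟨Finset.mem_univ _, ?_⟩
      rcases hj with hj | hj
      · exact hforced_dec d1 (hvalid G T (Fin G) I1) v j hj
      · rcases Finset.mem_insert.mp hj with rfl | hj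
        · exact hd1t'
        · rw [Finset.mem_singleton.mp hj]
          exact hd1t0
    have hdisj : Disjoint (Fu v) ({eF t', eF t₀} : Finset (Fin T)) := by
      rw [Finset.disjoint_left]
      intro j hj hj2
      have h1 := (hFumem v j hj).1
      rcases Finset.mem_insert.mp hj2 with rfl | hj2
      · exact absurd h1 (by show ¬ (M * G + (t' : ℕ) < M * G); omega)
      · rw [Finset.mem_singleton.mp hj2] at h1
        exact absurd h1 (by show ¬ (M * G + (t₀ : ℕ) < M * G); omega)
    have hpair : ({eF t', eF t₀} : Finset (Fin T)).card = 2 := by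
      rw [Finset.card_insert_of_notMem, Finset.card_singleton]
      rw [Finset.mem_singleton]
      intro h
      have := congrArg Fin.val h
      simp only [eF] at this
      omega
    have hcard : (Fu v ∪ {eF t', eF t₀}).card = M + 2 := by
      rw [Finset.card_union_of_disjoint hdisj, hFucard, hpair]
    calc M + 2 = (Fu v ∪ {eF t', eF t₀}).card := hcard.symm
      _ ≤ cnt v := Finset.card_le_card hsub
  have hstarve : ∃ u : Fin G, u ≠ v ∧ cnt u ≤ M + 1 := by
    by_contra hcon
    push_neg at hcon
    have hlow : ∀ u ∈ (Finset.univ : Finset (Fin G)), M + 2 ≤ cnt u := by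
      intro u _
      by_cases huv : u = v
      · rw [huv]; exact hcntv
      · exact hcon u huv
    have h1 : (Finset.univ : Finset (Fin G)).card • (M + 2) ≤ ∑ u : Fin G, cnt u :=
      Finset.card_nsmul_le_sum _ _ _ hlow
    rw [Finset.card_univ, Fintype.card_fin, smul_eq_mul, hfiber] at h1
    have hexp3 : G * (M + 2) = M * G + 2 * G := by ring
    omega
  -- ## Branch descriptions of the approval sets of I1
  have hA1forced : ∀ (u : Fin G) (j : Fin T), (j : ℕ) < M * G → owF G M hG0 j = u →
      I1.A u j = {u} := by
    intro u j h1 h2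
    show AF G M T hG0 v κ u j = {u}
    unfold AF
    rw [if_pos h1, if_pos h2.symm]
  have hA1forced0 : ∀ (u : Fin G) (j : Fin T), (j : ℕ) < M * G → owF G M hG0 j ≠ u →
      I1.A u j = ∅ := by
    intro u j h1 h2
    show AF G M T hG0 v κ u j = ∅
    unfold AF
    rw [if_pos h1, if_neg (fun h => h2 h.symm)]
  have hA1free : ∀ (u : Fin G) (j : Fin T), ¬((j : ℕ) < M * G) → (u ≠ v ∨ (j : ℕ) ≤ κ) →
      I1.A u j = {u} := by
    intro u j h1 h2
    show AF G M T hG0 v κ u j = {u}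
    unfold AF
    rw [if_neg h1, if_neg]
    rintro ⟨rfl, hlt⟩
    rcases h2 with h | h
    · exact h rfl
    · omega
  have hA1kill : ∀ (j : Fin T), ¬((j : ℕ) < M * G) → κ < (j : ℕ) → I1.A v j = ∅ := by
    intro j h1 h2
    show AF G M T hG0 v κ v j = ∅
    unfold AF
    rw [if_neg h1, if_pos ⟨rfl, h2⟩]
  -- ## What agreement of a singleton means
  have hagree_fact : ∀ (u : Fin G) (j : Fin T), I1.agrees {u} j →
      ((j : ℕ) < M * G ∧ u.val * M ≤ (j : ℕ) ∧ (j : ℕ) < u.val * M + M) ∨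
      (M * G ≤ (j : ℕ) ∧ (u = v → (j : ℕ) ≤ κ)) := by
    intro u j hj
    obtain ⟨c, hc⟩ := hj
    have hcu : c ∈ I1.A u j := hc u (Finset.mem_singleton_self u)
    by_cases h1 : (j : ℕ) < M * G
    · left
      have how : owF G M hG0 j = u := by
        by_contra hne
        rw [hA1forced0 u j h1 hne] at hcu
        exact absurd hcu (Finset.notMem_empty c)
      have := forced_inv G M (j : ℕ) u h1 (congrArg Fin.val how)
      exact ⟨h1, this.1, this.2⟩
    · right
      refine ⟨by omega, ?_⟩
      rintro rfl
      by_contra hκj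
      push_neg at hκj
      rw [hA1kill j h1 hκj] at hcu
      exact absurd hcu (Finset.notMem_empty c)
  -- ## Upper bounds on the agree counts of singletons
  have hagree_map : ∀ (u : Fin G) (B : ℕ),
      (∀ j : Fin T, I1.agrees {u} j → ¬((j : ℕ) < M * G) → (j : ℕ) - M * G < B) →
      I1.agreeCount {u} ≤ M + B := by
    intro u B hB
    rw [Inst.agreeCount]
    have hmap : ∀ j : Fin T, I1.agrees {u} j →
        (if (j : ℕ) < M * G then (j : ℕ) - u.val * M else M + ((j : ℕ) - M * G)) < M + B := by
      intro j hj
      rcases hagree_fact u j hj with ⟨h1, h2, h3⟩ | ⟨h1, h2⟩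
      · rw [if_pos h1]; omega
      · rw [if_neg (by omega)]
        have := hB j hj (by omega)
        omega
    have hφinj : ∀ j1 j2 : Fin T, I1.agrees {u} j1 → I1.agrees {u} j2 →
        (if (j1 : ℕ) < M * G then (j1 : ℕ) - u.val * M else M + ((j1 : ℕ) - M * G)) =
        (if (j2 : ℕ) < M * G then (j2 : ℕ) - u.val * M else M + ((j2 : ℕ) - M * G)) →
        j1 = j2 := by
      intro j1 j2 hj1 hj2 heq
      apply Fin.ext
      rcases hagree_fact u j1 hj1 with ⟨a1, b1, c1⟩ | ⟨a1, b1⟩ <;>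
        rcases hagree_fact u j2 hj2 with ⟨a2, b2, c2⟩ | ⟨a2, b2⟩
      · rw [if_pos a1, if_pos a2] at heq; omega
      · rw [if_pos a1, if_neg (by omega)] at heq; omega
      · rw [if_neg (by omega), if_pos a2] at heq; omega
      · rw [if_neg (by omega), if_neg (by omega)] at heq; omega
    apply nat_card_upper_inj _ (M + B)
      (fun j => ⟨if ((j : Fin T) : ℕ) < M * G then ((j : Fin T) : ℕ) - u.val * M
        else M + (((j : Fin T) : ℕ) - M * G), hmap (j : Fin T) j.2⟩)
    intro j1 j2 heq
    exact Subtype.ext (hφinj j1.1 j2.1 j1.2 j2.2 (congrArg Fin.val heq))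
  have hagree_up_v : I1.agreeCount {v} ≤ M + (t₀.val + 1) := by
    apply hagree_map
    intro j hj hjf
    rcases hagree_fact v j hj with ⟨h1, _, _⟩ | ⟨h1, h2⟩
    · exact absurd h1 hjf
    · have := h2 rfl
      omega
  have hagree_up : ∀ u : Fin G, I1.agreeCount {u} ≤ M + (2 * G - 1) := by
    intro u
    apply hagree_map
    intro j _ _
    have := j.isLt
    omega
  -- ## Lower bound on agreement for voters u ≠ v
  have hagree_low : ∀ u : Fin G, u ≠ v → M + (2 * G - 1) ≤ I1.agreeCount {u} := by
    intro u huv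
    rw [Inst.agreeCount]
    have hsub : ∀ j ∈ Fu u ∪ (Finset.range (2 * G - 1)).image (fun t => red (M * G + t)),
        I1.agrees {u} j := by
      intro j hj
      rw [Finset.mem_union] at hj
      rcases hj with hj | hj
      · obtain ⟨h1, h2⟩ := hFumem u j hj
        refine ⟨u, ?_⟩
        intro i hi
        rw [Finset.mem_singleton] at hi
        rw [hi, hA1forced u j h1 h2]
        exact Finset.mem_singleton_self u
      · obtain ⟨t, ht, rfl⟩ := Finset.mem_image.mp hj
        rw [Finset.mem_range] at ht
        have hlt : M * G + t < T := by omega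
        have hval : (red (M * G + t) : ℕ) = M * G + t := hredval _ hlt
        refine ⟨u, ?_⟩
        intro i hi
        rw [Finset.mem_singleton] at hi
        rw [hi, hA1free u _ (by omega) (Or.inl huv)]
        exact Finset.mem_singleton_self u
    have hdisj : Disjoint (Fu u) ((Finset.range (2 * G - 1)).image (fun t => red (M * G + t))) := by
      rw [Finset.disjoint_left]
      intro j hj hj2
      have h1 := (hFumem u j hj).1
      obtain ⟨t, ht, rfl⟩ := Finset.mem_image.mp hj2
      rw [Finset.mem_range] at ht
      have hval : (red (M * G + t) : ℕ) = M * G + t := hredval _ (by omega)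
      omega
    have hcard2 : ((Finset.range (2 * G - 1)).image (fun t => red (M * G + t))).card = 2 * G - 1 := by
      rw [Finset.card_image_of_injOn, Finset.card_range]
      intro x hx y hy hxy
      rw [Finset.mem_coe, Finset.mem_range] at hx hy
      have hxy' : red (M * G + x) = red (M * G + y) := hxy
      rw [Fin.ext_iff, hredval _ (by omega), hredval _ (by omega)] at hxy'
      omega
    calc M + (2 * G - 1) = (Fu u ∪ (Finset.range (2 * G - 1)).image (fun t => red (M * G + t))).card := by
          rw [Finset.card_union_of_disjoint hdisj, hFucard, hcard2]
      _ ≤ _ := nat_card_lower _ _ hsub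
  -- ## happyCount of a singleton is at most the number of rounds decided for it
  have hhappy_le : ∀ (dd : Fin T → Fin G) (u : Fin G),
      I1.happyCount dd {u} ≤ (Finset.univ.filter fun j : Fin T => dd j = u).card := by
    intro dd u
    rw [Inst.happyCount]
    apply nat_card_upper
    intro j hj
    obtain ⟨i, hi, hdi⟩ := hj
    rw [Finset.mem_singleton] at hi
    rw [hi] at hdi
    have hsub := AF_subset G M T hG0 v κ u j hdi
    rw [Finset.mem_filter]
    exact ⟨Finset.mem_univ _, Finset.mem_singleton.mp hsub⟩
  -- ## The good decision sequence
  have h2G0 : 0 < 2 * G - 1 := by omega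
  set gm1 : Fin G := mkmod G hG0 (G - 1) with hgm1def
  have hgm1val : gm1.val = G - 1 := mkmod_val G hG0 (G - 1) (by omega)
  set t0' : Fin (2 * G - 1) := mkmod (2 * G - 1) h2G0 t₀.val with ht0'def
  have ht0'val : t0'.val = t₀.val := mkmod_val _ h2G0 _ (by have := t₀.isLt; omega)
  set last' : Fin (2 * G - 1) := mkmod (2 * G - 1) h2G0 (2 * G - 2) with hlastdef
  have hlastval : last'.val = 2 * G - 2 := mkmod_val _ h2G0 _ (by omega)
  set τ : Fin (2 * G - 1) → Fin G := fun t => mkmod G hG0 (t.val / 2) with hτdef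
  have hτval : ∀ t : Fin (2 * G - 1), (τ t).val = t.val / 2 := by
    intro t
    exact mkmod_val G hG0 _ (by have := t.isLt; omega)
  set ds : Fin T → Fin G := fun j =>
    if (j : ℕ) < M * G then owF G M hG0 j
    else Equiv.swap v gm1 (τ (Equiv.swap t0' last' (mkmod (2 * G - 1) h2G0 ((j : ℕ) - M * G))))
    with hdsdef
  have hdsvalid : I1.ValidSeq ds := by
    intro j
    show ds j ∈ CF G M T hG0 j
    by_cases h : (j : ℕ) < M * G
    · rw [hdsdef]
      simp only [CF, if_pos h]
      exact Finset.mem_singleton_self _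
    · simp only [CF, if_neg h]
      exact Finset.mem_univ _
  have hqlt : ∀ t : Fin (2 * G - 1), M * G + t.val < T := by
    intro t; have := t.isLt; omega
  have hq : ∀ t : Fin (2 * G - 1),
      ds ⟨M * G + t.val, hqlt t⟩ = Equiv.swap v gm1 (τ (Equiv.swap t0' last' t)) := by
    intro t
    rw [hdsdef]
    simp only [if_neg (show ¬ (M * G + t.val < M * G) by omega)]
    have harg : mkmod (2 * G - 1) h2G0 (M * G + t.val - M * G) = t := by
      apply Fin.ext
      rw [mkmod_val (2 * G - 1) h2G0 (M * G + t.val - M * G) (by have := t.isLt; omega)]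
      omega
    rw [harg]
  -- ds serves v at round M*G + t₀
  have hτlast : τ last' = gm1 := by
    apply Fin.ext
    rw [hτval, hgm1val, hlastval]
    omega
  have hdst0 : ds ⟨M * G + t0'.val, hqlt t0'⟩ = v := by
    rw [hq t0', Equiv.swap_apply_left, hτlast, Equiv.swap_apply_right]
  -- ds serves each u ≠ v at two distinct free rounds
  have hds2 : ∀ u : Fin G, u ≠ v → ∃ r1 r2 : Fin T, r1 ≠ r2 ∧
      M * G ≤ (r1 : ℕ) ∧ M * G ≤ (r2 : ℕ) ∧ ds r1 = u ∧ ds r2 = u := by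
    intro u huv
    set s' : Fin G := Equiv.swap v gm1 u with hs'def
    have hs'ne : s' ≠ gm1 := by
      rw [hs'def]
      by_cases h1 : v = gm1
      · rw [h1, Equiv.swap_self]
        simpa using (fun h => huv (h.trans h1.symm))
      · by_cases h2 : u = gm1
        · rw [h2, Equiv.swap_apply_right]
          exact h1
        · rw [Equiv.swap_apply_of_ne_of_ne huv h2]
          exact h2
    have hs'lt : s'.val < G - 1 := by
      have h1 : s'.val ≠ G - 1 := by
        intro h
        exact hs'ne (Fin.ext (by rw [h, hgm1val]))
      have := s'.isLt
      omega
    set x1 : Fin (2 * G - 1) := mkmod (2 * G - 1) h2G0 (2 * s'.val) with hx1def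
    have hx1val : x1.val = 2 * s'.val := mkmod_val _ h2G0 _ (by omega)
    set x2 : Fin (2 * G - 1) := mkmod (2 * G - 1) h2G0 (2 * s'.val + 1) with hx2def
    have hx2val : x2.val = 2 * s'.val + 1 := mkmod_val _ h2G0 _ (by omega)
    set p1 : Fin (2 * G - 1) := Equiv.swap t0' last' x1 with hp1def
    set p2 : Fin (2 * G - 1) := Equiv.swap t0' last' x2 with hp2def
    have hτ1 : τ x1 = s' := by
      apply Fin.ext
      rw [hτval, hx1val]
      omega
    have hτ2 : τ x2 = s' := by
      apply Fin.ext
      rw [hτval, hx2val]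
      omega
    refine ⟨⟨M * G + p1.val, hqlt p1⟩, ⟨M * G + p2.val, hqlt p2⟩, ?_,
      Nat.le_add_right _ _, Nat.le_add_right _ _, ?_, ?_⟩
    · intro h
      have hval := congrArg Fin.val h
      have hp : p1 = p2 := Fin.ext (by
        have : M * G + p1.val = M * G + p2.val := hval
        omega)
      rw [hp1def, hp2def] at hp
      have hx : x1 = x2 := (Equiv.swap t0' last').injective hp
      have := congrArg Fin.val hx
      rw [hx1val, hx2val] at this
      omega
    · rw [hq p1, hp1def, Equiv.swap_apply_self, hτ1, hs'def, Equiv.swap_apply_self]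
    · rw [hq p2, hp2def, Equiv.swap_apply_self, hτ2, hs'def, Equiv.swap_apply_self]
  -- ## Lower bounds on happiness under ds
  have hds_forced : ∀ (u : Fin G) (j : Fin T), j ∈ Fu u → ds j = u :=
    fun u j hj => hforced_dec ds hdsvalid u j hj
  have hhappy_v : M + 1 ≤ I1.happyCount ds {v} := by
    rw [Inst.happyCount]
    have hsub : ∀ j ∈ Fu v ∪ {(⟨M * G + t0'.val, hqlt t0'⟩ : Fin T)},
        ∃ i ∈ ({v} : Finset (Fin G)), ds j ∈ I1.A i j := by
      intro j hj
      refine ⟨v, Finset.mem_singleton_self v, ?_⟩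
      rw [Finset.mem_union] at hj
      rcases hj with hj | hj
      · rw [hds_forced v j hj, hA1forced v j (hFumem v j hj).1 (hFumem v j hj).2]
        exact Finset.mem_singleton_self v
      · rw [Finset.mem_singleton] at hj
        subst hj
        rw [hdst0, hA1free v _ (by show ¬ (M * G + t0'.val < M * G); omega)
          (Or.inr (by show M * G + t0'.val ≤ κ; omega))]
        exact Finset.mem_singleton_self v
    have hdisj : Disjoint (Fu v) {(⟨M * G + t0'.val, hqlt t0'⟩ : Fin T)} := by
      rw [Finset.disjoint_left]
      intro j hj hj2
      rw [Finset.mem_singleton] at hj2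
      have h1 := (hFumem v j hj).1
      rw [hj2] at h1
      exact absurd h1 (by show ¬ (M * G + t0'.val < M * G); omega)
    calc M + 1 = (Fu v ∪ {(⟨M * G + t0'.val, hqlt t0'⟩ : Fin T)}).card := by
          rw [Finset.card_union_of_disjoint hdisj, hFucard, Finset.card_singleton]
      _ ≤ _ := nat_card_lower _ _ hsub
  have hhappy_u : ∀ u : Fin G, u ≠ v → M + 2 ≤ I1.happyCount ds {u} := by
    intro u huv
    obtain ⟨r1, r2, hr12, hr1f, hr2f, hdr1, hdr2⟩ := hds2 u huv
    rw [Inst.happyCount]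
    have hsub : ∀ j ∈ Fu u ∪ {r1, r2}, ∃ i ∈ ({u} : Finset (Fin G)), ds j ∈ I1.A i j := by
      intro j hj
      refine ⟨u, Finset.mem_singleton_self u, ?_⟩
      rw [Finset.mem_union] at hj
      rcases hj with hj | hj
      · rw [hds_forced u j hj, hA1forced u j (hFumem u j hj).1 (hFumem u j hj).2]
        exact Finset.mem_singleton_self u
      · rcases Finset.mem_insert.mp hj with rfl | hj
        · rw [hdr1, hA1free u _ (by omega) (Or.inl huv)]
          exact Finset.mem_singleton_self u
        · rw [Finset.mem_singleton] at hj
          subst hj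
          rw [hdr2, hA1free u _ (by omega) (Or.inl huv)]
          exact Finset.mem_singleton_self u
    have hdisj : Disjoint (Fu u) ({r1, r2} : Finset (Fin T)) := by
      rw [Finset.disjoint_left]
      intro j hj hj2
      have h1 := (hFumem u j hj).1
      rcases Finset.mem_insert.mp hj2 with rfl | hj2
      · omega
      · rw [Finset.mem_singleton] at hj2
        rw [hj2] at h1
        omega
    have hpair : ({r1, r2} : Finset (Fin T)).card = 2 := by
      rw [Finset.card_insert_of_notMem (by rw [Finset.mem_singleton]; exact hr12),
        Finset.card_singleton]
    calc M + 2 = (Fu u ∪ {r1, r2}).card := by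
          rw [Finset.card_union_of_disjoint hdisj, hFucard, hpair]
      _ ≤ _ := nat_card_lower _ _ hsub
  -- ## The good sequence satisfies ε-Stronger PJR
  have hgood : I1.epsStrongerPJR ε ds := by
    intro ℓ hℓ k hk1 hkT S hS hagree hsize
    by_cases h2 : 2 ≤ S.card
    · exfalso
      obtain ⟨i1, hi1, i2, hi2, hne⟩ := Finset.one_lt_card.mp (show 1 < S.card by omega)
      have hempty : I1.agreeCount S = 0 := by
        rw [Inst.agreeCount]
        have : IsEmpty {j : Fin T // I1.agrees S j} := by
          constructor
          rintro ⟨j, c, hc⟩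
          have ha := AF_subset G M T hG0 v κ i1 j (hc i1 hi1)
          have hb := AF_subset G M T hG0 v κ i2 j (hc i2 hi2)
          rw [Finset.mem_singleton] at ha hb
          exact hne (ha ▸ hb ▸ rfl)
        exact Nat.card_of_isEmpty
      omega
    · have hcard1 : S.card = 1 := by
        have := Finset.card_pos.mpr hS
        omega
      obtain ⟨u, rfl⟩ := Finset.card_eq_one.mp hcard1
      have hsize1 : ((ℓ : ℝ) - ε) * G / k ≤ 1 := by
        simpa using hsize
      by_cases huv : u = v
      · subst huv
        have hk2 : k ≤ M + (t₀.val + 1) := le_trans hagree hagree_up_v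
        have ht0G : t₀.val ≤ G := by have := t₀.isLt; omega
        have hkR : (k : ℝ) ≤ (M : ℝ) + G + 1 := by
          have h1 : (k : ℝ) ≤ ((M + (t₀.val + 1) : ℕ) : ℝ) := Nat.cast_le.mpr hk2
          have h2 : ((M + (t₀.val + 1) : ℕ) : ℝ) = (M : ℝ) + (t₀.val : ℝ) + 1 := by
            push_cast; ring
          have h3 : ((t₀.val : ℕ) : ℝ) ≤ (G : ℝ) := Nat.cast_le.mpr ht0G
          rw [h2] at h1
          linarith
        exact le_trans (hLC ℓ k hk1 hkR hsize1) hhappy_v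
      · have hk2 : k ≤ M + (2 * G - 1) := le_trans hagree (hagree_up u)
        have hkR : (k : ℝ) ≤ (M : ℝ) + 2 * G - 1 := by
          have h1 : (k : ℝ) ≤ ((M + (2 * G - 1) : ℕ) : ℝ) := Nat.cast_le.mpr hk2
          have h2 : ((M + (2 * G - 1) : ℕ) : ℝ) = (M : ℝ) + 2 * G - 1 := by
            push_cast [Nat.cast_sub (show 1 ≤ 2 * G by omega)]
            ring
          rw [h2] at h1
          exact h1
        exact le_trans (hLB ℓ k hk1 hkR hsize1) (hhappy_u u huv)
  -- ## The rule's output violates ε-Stronger PJR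
  have hfail : ¬ I1.epsStrongerPJR ε d1 := by
    intro hPJR
    obtain ⟨u, huv, hcnt⟩ := hstarve
    have hag : M + (2 * G - 1) ≤ I1.agreeCount {u} := hagree_low u huv
    have hk1 : 1 ≤ M + (2 * G - 1) := by omega
    have hkT : M + (2 * G - 1) ≤ T := by omega
    have hsz : (((M + 2 : ℕ) : ℝ) - ε) * (G : ℝ) / ((M + (2 * G - 1) : ℕ) : ℝ) ≤
        ((({u} : Finset (Fin G)).card : ℕ) : ℝ) := by
      rw [Finset.card_singleton]
      have hc1 : ((M + 2 : ℕ) : ℝ) = (M : ℝ) + 2 := by push_cast; ring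
      have hc2 : ((M + (2 * G - 1) : ℕ) : ℝ) = (M : ℝ) + 2 * G - 1 := by
        push_cast [Nat.cast_sub (show 1 ≤ 2 * G by omega)]
        ring
      rw [hc1, hc2]
      simpa using hLA
    have h := hPJR (M + 2) (by omega) (M + (2 * G - 1)) hk1 hkT {u}
      ⟨u, Finset.mem_singleton_self u⟩ hag hsz
    have hle := hhappy_le d1 u
    have hcnt' : (Finset.univ.filter fun j : Fin T => d1 j = u).card = cnt u := rfl
    omega
  exact ⟨G, T, Fin G, I1, ⟨ds, hdsvalid, hgood⟩, hfail⟩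
end

section
/- There exists a decision instance for which no decision sequence satisfies ℓ-Agreement PJR. -/
attribute [local instance] Classical.propDecidable

namespace Inst

variable {n T : ℕ} {γ : Type}

/-- `D` satisfies ℓ-Agreement PJR: for every `ℓ ≥ 1` and every nonempty group `S` that
agrees in at least `ℓ` rounds with `|S| ≥ ℓ·n/T`, there are at least `ℓ` rounds whose
decision is approved by some member of `S`. -/
def lAgreementPJR (I : Inst n T γ) (d : Fin T → γ) : Prop :=
  ∀ ℓ : ℕ, 1 ≤ ℓ →
    ∀ S : Finset (Fin n), S.Nonempty → ℓ ≤ I.agreeCount S →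
      (ℓ : ℝ) * n / T ≤ S.card → ℓ ≤ I.happyCount d S

end Inst

/-- there is a decision instance on which no decision sequence satisfies
ℓ-Agreement PJR. -/
theorem lAgreement_PJR_infeasible :
    ∃ (n T : ℕ) (γ : Type) (I : Inst n T γ),
      ∀ d : Fin T → γ, I.ValidSeq d → ¬ I.lAgreementPJR d := by
  classical
  refine ⟨2, 2, Bool,
    { hn := by norm_num
      hT := by norm_num
      C := fun _ => Finset.univ
      hC := fun j => Finset.univ_nonempty
      A := fun i j => if j = 0 then {decide (i = 0)} else ∅
      hA := fun i j => Finset.subset_univ _ }, ?_⟩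
  intro d _ hpjr
  have key : ∀ i : Fin 2, d 0 = decide (i = 0) := by
    intro i
    have hagree : (1:ℕ) ≤ Nat.card {j : Fin 2 // ∃ c, ∀ i' ∈ ({i} : Finset (Fin 2)), c ∈ (if j = 0 then ({decide (i' = 0)} : Finset Bool) else ∅)} := by
      have : Nonempty {j : Fin 2 // ∃ c, ∀ i' ∈ ({i} : Finset (Fin 2)), c ∈ (if j = 0 then ({decide (i' = 0)} : Finset Bool) else ∅)} := by
        refine ⟨⟨0, decide (i = 0), ?_⟩⟩
        intro i' hi'
        simp at hi'
        subst hi'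
        simp
      exact Nat.card_pos
    have h := hpjr 1 le_rfl {i} ⟨i, Finset.mem_singleton_self i⟩ hagree
      (by push_cast; norm_num)
    have hpos : 0 < Nat.card {j : Fin 2 // ∃ i' ∈ ({i} : Finset (Fin 2)), d j ∈ (if j = 0 then ({decide (i' = 0)} : Finset Bool) else ∅)} := h
    rw [Nat.card_pos_iff] at hpos
    obtain ⟨⟨j, i', hi', hj⟩, _⟩ := hpos
    simp only [Finset.mem_singleton] at hi'
    subst hi'
    fin_cases j
    · simpa using hj
    · simp at hj
  have h0 := key 0
  have h1 := key 1
  simp at h0 h1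
  rw [h0] at h1
  simp at h1
end

section
/- For every α with 0 < α < 1, there exists a decision instance for which no decision sequence satisfies α-ℓ-Agreement PJR. -/
attribute [local instance] Classical.propDecidable

namespace Inst

variable {n T : ℕ} {γ : Type}

/-- For `0 < a < 1`, `D` satisfies `a`-ℓ-Agreement PJR: for every `ℓ ≥ 1` and every
nonempty group `S` that agrees in at least `ℓ` rounds with `|S| ≥ ℓ·n/T`, there are at
least `⌊a·ℓ⌋` rounds whose decision is approved by some member of `S`. -/
def alphaEllAgreementPJR (I : Inst n T γ) (a : ℝ) (d : Fin T → γ) : Prop :=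
  ∀ ℓ : ℕ, 1 ≤ ℓ →
    ∀ S : Finset (Fin n), S.Nonempty → ℓ ≤ I.agreeCount S →
      (ℓ : ℝ) * n / T ≤ S.card → ⌊a * ℓ⌋₊ ≤ I.happyCount d S

end Inst

/-!
Take `k` voters and `k²` rounds with `⌊α k⌋ ≥ 2`. In each of the first `k` rounds voter `i`
approves only the alternative `i`; in the remaining rounds nobody approves anything. Every
singleton group agrees in `k` rounds and has size `1 = k · n / T`, so with `ℓ = k` each voter
must be satisfied in at least `2` rounds. But only the first `k` rounds satisfy anybody, and
each satisfies at most one voter, so the utilities sum to at most `k < 2k`.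
-/

open Finset

namespace Inst

variable {n T : ℕ} {γ : Type}

theorem happyCount_singleton (I : Inst n T γ) (d : Fin T → γ) (i : Fin n) :
    I.happyCount d {i} = I.util d i := by
  simp [happyCount, util]

theorem sum_util_eq_sum_card_approvers [DecidableEq γ] (I : Inst n T γ) (d : Fin T → γ) :
    ∑ i, I.util d i = ∑ j, #{i | d j ∈ I.A i j} := by
  simp only [util, Nat.card_eq_fintype_card, Fintype.card_subtype, card_filter]
  exact sum_comm

theorem alphaEllAgreementPJR.le_util {I : Inst n T γ} {a : ℝ} {d : Fin T → γ}
    (h : I.alphaEllAgreementPJR a d) {ℓ : ℕ} (hℓ : 1 ≤ ℓ) (i : Fin n)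
    (hagree : ℓ ≤ I.agreeCount {i}) (hℓT : ℓ * n ≤ T) : ⌊a * ℓ⌋₊ ≤ I.util d i := by
  rw [← happyCount_singleton]
  refine h ℓ hℓ {i} (singleton_nonempty i) hagree ?_
  have hT : (0 : ℝ) < T := by exact_mod_cast I.hT
  rw [card_singleton, Nat.cast_one, div_le_one hT]
  exact_mod_cast hℓT

def privateApprovals (k : ℕ) (hk : 0 < k) : Inst k (k * k) (Fin k) where
  hn := hk
  hT := Nat.mul_pos hk hk
  C _ := univ
  hC _ := ⟨⟨0, hk⟩, mem_univ _⟩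
  A i j := if (j : ℕ) < k then {i} else ∅
  hA _ _ := subset_univ _

variable {k : ℕ} {hk : 0 < k}

theorem privateApprovals_agreeCount_singleton (i : Fin k) :
    k ≤ (privateApprovals k hk).agreeCount {i} := by
  have hkk : k ≤ k * k := Nat.le_mul_of_pos_left k hk
  have hagrees (m : Fin k) : (privateApprovals k hk).agrees {i} (Fin.castLE hkk m) :=
    ⟨i, by simp [privateApprovals, m.isLt]⟩
  simpa [agreeCount] using Nat.card_le_card_of_injective
    (fun m => (⟨Fin.castLE hkk m, hagrees m⟩ : {j // (privateApprovals k hk).agrees {i} j}))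
    fun m₁ m₂ h => Fin.castLE_injective hkk (congrArg Subtype.val h)

theorem privateApprovals_card_approvers_le (d : Fin (k * k) → Fin k) (j : Fin (k * k)) :
    #{i | d j ∈ (privateApprovals k hk).A i j} ≤ if (j : ℕ) < k then 1 else 0 := by
  split_ifs with hj
  · exact card_le_one.mpr fun i₁ h₁ i₂ h₂ => by
      simp_all [privateApprovals]
  · simp [privateApprovals, hj]

theorem privateApprovals_sum_util_le (d : Fin (k * k) → Fin k) :
    ∑ i, (privateApprovals k hk).util d i ≤ k := by
  calc ∑ i, (privateApprovals k hk).util d i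
      ≤ ∑ j : Fin (k * k), if (j : ℕ) < k then 1 else 0 := by
        rw [sum_util_eq_sum_card_approvers]
        exact sum_le_sum fun j _ => privateApprovals_card_approvers_le d j
    _ = min (k * k) k := by rw [sum_boole, Nat.cast_id, Fin.card_filter_val_lt]
    _ ≤ k := min_le_right _ _

end Inst

theorem exists_nat_le_floor_mul (m : ℕ) {a : ℝ} (ha : 0 < a) : ∃ k : ℕ, m ≤ ⌊a * k⌋₊ := by
  obtain ⟨k, hk⟩ := exists_nat_ge (m / a)
  exact ⟨k, Nat.le_floor (by rwa [div_le_iff₀ ha, mul_comm] at hk)⟩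

theorem alpha_ell_agreement_PJR_infeasible_general (a : ℝ) (ha₀ : 0 < a) :
    ∃ (n T : ℕ) (γ : Type) (I : Inst n T γ),
      ∀ d : Fin T → γ, I.ValidSeq d → ¬ I.alphaEllAgreementPJR a d := by
  obtain ⟨k, hk⟩ := exists_nat_le_floor_mul 2 ha₀
  have hk₀ : 0 < k := Nat.pos_of_ne_zero fun h => by simp [h] at hk
  refine ⟨k, k * k, Fin k, Inst.privateApprovals k hk₀, fun d _ hd => ?_⟩
  have hutil (i : Fin k) : 2 ≤ (Inst.privateApprovals k hk₀).util d i :=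
    hk.trans (hd.le_util hk₀ i (Inst.privateApprovals_agreeCount_singleton i) le_rfl)
  have hsum : 2 * k ≤ ∑ i, (Inst.privateApprovals k hk₀).util d i := by
    simpa [mul_comm] using sum_le_sum fun i (_ : i ∈ univ) => hutil i
  have hsum_le := Inst.privateApprovals_sum_util_le (hk := hk₀) d
  omega

/-- for every `0 < α < 1` there is a decision instance on which no decision
sequence satisfies `α`-ℓ-Agreement PJR. -/
theorem alpha_ell_agreement_PJR_infeasible (a : ℝ) (ha₀ : 0 < a) (ha₁ : a < 1) :
    ∃ (n T : ℕ) (γ : Type) (I : Inst n T γ),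
      ∀ d : Fin T → γ, I.ValidSeq d → ¬ I.alphaEllAgreementPJR a d :=
  alpha_ell_agreement_PJR_infeasible_general a ha₀
end
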